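/- arXiv:1906.04126 — 9 statements merged into one kernel-verified Lean document; each statement's English description precedes it below -/
import Mathlib

section
/- For any sequence of unit vectors v_1,...,v_n in a real inner product space H, there exists a unit vector v in H such that |⟨v_k, v⟩| ≥ sin(π/(2n)) for all k = 1,...,n. -/
/-!
Take `u` maximizing `|∏ i, ⟪v i, u⟫|` on the unit sphere of the (finite-dimensional) span of
the `v i`; the maximum is nonzero. If `|⟪v k, u⟫| < sin (π / (2 * n))`, turn `u` towards `v k`
along a great circle `t ↦ cos t • u + sin t • w`. Along it the product is a trigonometric
polynomial of degree `n` whose modulus is maximal at `t = 0` and which vanishes at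
`t₀ = arcsin |⟪v k, u⟫| < π / (2 * n)`. Comparing it with `μ * sin (n * (t - t₀))`, where `μ` is
chosen so that the difference also vanishes at `0`, produces `2 * n + 1` zeros of a nonzero
trigonometric polynomial of degree `n` in one period, which is impossible.
-/

open Real RealInnerProductSpace Polynomial

lemma sub_mul_neg_sub_neg_of_abs_lt {m a b : ℝ} (ha : |a| < |m|) (hb : |b| < |m|) :
    (m - a) * (-m - b) < 0 := by
  rcases abs_lt.1 ha with ⟨ha₁, ha₂⟩
  rcases abs_lt.1 hb with ⟨hb₁, hb₂⟩
  rcases abs_cases m with ⟨hm, -⟩ | ⟨hm, -⟩ <;> rw [hm] at ha₁ ha₂ hb₁ hb₂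
  · exact mul_neg_of_pos_of_neg (by linarith) (by linarith)
  · exact mul_neg_of_neg_of_pos (by linarith) (by linarith)

lemma exists_zeros_of_mul_neg {g : ℝ → ℝ} (hg : Continuous g) {q : ℕ → ℝ} (hq : StrictMono q)
    (hsign : ∀ j, g (q j) * g (q (j + 1)) < 0) :
    ∃ r : ℕ → ℝ, (∀ j, r j ∈ Set.Ioo (q j) (q (j + 1))) ∧ ∀ j, g (r j) = 0 := by
  have hroot : ∀ j, ∃ x ∈ Set.Ioo (q j) (q (j + 1)), g x = 0 := fun j => by
    have hle := (hq (Nat.lt_succ_self j)).le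
    rcases mul_neg_iff.1 (hsign j) with ⟨h₁, h₂⟩ | ⟨h₁, h₂⟩
    · exact intermediate_value_Ioo' hle hg.continuousOn ⟨h₂, h₁⟩
    · exact intermediate_value_Ioo hle hg.continuousOn ⟨h₁, h₂⟩
  choose r hr hgr using hroot
  exact ⟨r, hr, hgr⟩

open Complex in
/-- Real trigonometric polynomials of degree at most `n`, encoded through
`e^{int} f(t) = P(e^{it})` with `deg P ≤ 2 * n`. -/
def IsTrigPoly (n : ℕ) (f : ℝ → ℝ) : Prop :=
  ∃ P : ℂ[X], P.natDegree ≤ 2 * n ∧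
    ∀ t : ℝ, (f t : ℂ) = Complex.exp (-(n * (t * I))) * P.eval (Complex.exp (t * I))

open Complex in
lemma isTrigPoly_cos_add_sin (a b : ℝ) : IsTrigPoly 1 fun t => a * Real.cos t + b * Real.sin t := by
  refine ⟨C ((a - b * I) / 2) * X ^ 2 + C ((a + b * I) / 2), ?_, fun t => ?_⟩
  · refine (natDegree_add_le _ _).trans (max_le (natDegree_C_mul_X_pow_le _ _) ?_)
    simp
  · simp only [eval_add, eval_mul, eval_C, eval_pow, eval_X, Nat.cast_one, one_mul]
    rw [← cos_add_sin_I, ← neg_mul, ← cos_sub_sin_I]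
    push_cast
    linear_combination -((a - b * I) / 2 * (Complex.cos t + Complex.sin t * I)) *
        Complex.sin_sq_add_cos_sq (t : ℂ) + ((a - b * I) / 2 * (Complex.cos t + Complex.sin t * I) *
        Complex.sin t ^ 2 + b * Complex.sin t) * I_sq

open Complex in
lemma isTrigPoly_mul_sin_nat_mul_sub (n : ℕ) (μ t₀ : ℝ) :
    IsTrigPoly n fun t => μ * Real.sin (n * (t - t₀)) := by
  set A : ℂ := -(μ * I) / 2
  refine ⟨C (A * Complex.exp (-(n * (t₀ * I)))) * X ^ (2 * n) - C (A * Complex.exp (n * (t₀ * I))),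
    ?_, fun t => ?_⟩
  · refine (natDegree_sub_le _ _).trans (max_le (natDegree_C_mul_X_pow_le _ _) ?_)
    rw [natDegree_C]; omega
  · have h₁ : Complex.exp (-(n * (t * I))) *
          (Complex.exp (-(n * (t₀ * I))) * Complex.exp (t * I) ^ (2 * n))
        = Complex.cos (n * (t - t₀)) + Complex.sin (n * (t - t₀)) * I := by
      rw [cos_add_sin_I, ← Complex.exp_nat_mul, ← Complex.exp_add, ← Complex.exp_add]
      push_cast; ring_nf
    have h₂ : Complex.exp (-(n * (t * I))) * Complex.exp (n * (t₀ * I))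
        = Complex.cos (n * (t - t₀)) - Complex.sin (n * (t - t₀)) * I := by
      rw [cos_sub_sin_I, ← Complex.exp_add]
      ring_nf
    simp only [eval_sub, eval_mul, eval_C, eval_pow, eval_X]
    push_cast
    linear_combination (-A) * h₁ + A * h₂ + μ * Complex.sin (n * (t - t₀)) * I_sq

namespace IsTrigPoly

variable {m n : ℕ} {f g : ℝ → ℝ}

lemma one : IsTrigPoly 0 1 := ⟨1, by simp, fun t => by simp⟩

open Complex in
lemma mul (hf : IsTrigPoly m f) (hg : IsTrigPoly n g) :
    IsTrigPoly (m + n) (f * g) := by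
  obtain ⟨P, hP, hfP⟩ := hf
  obtain ⟨Q, hQ, hgQ⟩ := hg
  refine ⟨P * Q, natDegree_mul_le.trans (by omega), fun t => ?_⟩
  have hexp : Complex.exp (-(((m + n : ℕ) : ℂ) * (t * I)))
      = Complex.exp (-(m * (t * I))) * Complex.exp (-(n * (t * I))) := by
    rw [← Complex.exp_add]; push_cast; ring_nf
  rw [Pi.mul_apply, ofReal_mul, hfP, hgQ, eval_mul, hexp]
  ring

lemma prod {ι : Type*} (s : Finset ι) {d : ι → ℕ} {f : ι → ℝ → ℝ}
    (h : ∀ i ∈ s, IsTrigPoly (d i) (f i)) : IsTrigPoly (∑ i ∈ s, d i) (∏ i ∈ s, f i) := by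
  classical
  induction s using Finset.induction_on with
  | empty => simpa using one
  | insert j s hj ih =>
    rw [Finset.prod_insert hj, Finset.sum_insert hj]
    exact (h j (Finset.mem_insert_self j s)).mul (ih fun i hi => h i (Finset.mem_insert_of_mem hi))

lemma sub (hf : IsTrigPoly n f) (hg : IsTrigPoly n g) :
    IsTrigPoly n (f - g) := by
  obtain ⟨P, hP, hfP⟩ := hf
  obtain ⟨Q, hQ, hgQ⟩ := hg
  exact ⟨P - Q, (natDegree_sub_le _ _).trans (max_le hP hQ), fun t => by simp [hfP, hgQ, mul_sub]⟩

lemma continuous (hf : IsTrigPoly n f) : Continuous f := by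
  obtain ⟨P, -, hfP⟩ := hf
  have : Continuous fun t : ℝ => (f t : ℂ) := by simp_rw [hfP]; fun_prop
  simpa [Function.comp_def] using Complex.continuous_re.comp this

open Complex in
lemma eq_zero_of_card_roots (hf : IsTrigPoly n f) {a : ℝ} {T : Finset ℝ}
    (hT : ∀ t ∈ T, t ∈ Set.Ico a (a + 2 * π)) (hroots : ∀ t ∈ T, f t = 0)
    (hcard : 2 * n < T.card) : f = 0 := by
  obtain ⟨P, hP, hfP⟩ := hf
  have hinj : Set.InjOn (fun t : ℝ => Complex.exp (t * I)) T := fun s hs t ht hst =>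
    Circle.exp_injOn_Ico (by simp) (hT s hs) (hT t ht) (Circle.ext hst)
  have hP : P = 0 := by
    refine eq_zero_of_natDegree_lt_card_of_eval_eq_zero' P
      (T.image fun t : ℝ => Complex.exp (t * I)) ?_ ?_
    · simp only [Finset.mem_image, forall_exists_index, and_imp, forall_apply_eq_imp_iff₂]
      intro t ht
      simpa [hroots t ht, Complex.exp_ne_zero] using (hfP t).symm
    · rw [Finset.card_image_of_injOn hinj]; omega
  funext t
  simpa [hP] using hfP t

lemma eq_zero_of_sign_changes (hf : IsTrigPoly n f) {a t₀ : ℝ} (ht₀ : a < t₀) (hfa : f a = 0)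
    (hft₀ : f t₀ = 0) {q : ℕ → ℝ} (hq : StrictMono q) (ht₀q : t₀ < q 0)
    (hq2π : q (2 * n - 1) < a + 2 * π) (hsign : ∀ j, f (q j) * f (q (j + 1)) < 0) : f = 0 := by
  obtain ⟨r, hr, hfr⟩ := exists_zeros_of_mul_neg hf.continuous hq hsign
  have hr_mono : StrictMono r :=
    strictMono_nat_of_lt_succ fun j => (hr j).2.trans (hr (j + 1)).1
  have hr₀ : ∀ j, t₀ < r j := fun j =>
    ht₀q.trans ((hq.monotone (Nat.zero_le j)).trans_lt (hr j).1)
  have hr₁ : ∀ j < 2 * n - 1, r j < a + 2 * π := fun j hj =>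
    (hr j).2.trans_le ((hq.monotone (show j + 1 ≤ 2 * n - 1 by omega)).trans hq2π.le)
  have ht₀₁ : t₀ < a + 2 * π := ht₀q.trans ((hq.monotone (Nat.zero_le _)).trans_lt hq2π)
  set T := insert a (insert t₀ ((Finset.range (2 * n - 1)).image r))
  refine hf.eq_zero_of_card_roots (a := a) (T := T) ?_ ?_ ?_
  · simp only [T, Finset.mem_insert, Finset.mem_image, Finset.mem_range]
    rintro t (rfl | rfl | ⟨j, hj, rfl⟩)
    · exact ⟨le_rfl, by linarith [two_pi_pos]⟩
    · exact ⟨ht₀.le, ht₀₁⟩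
    · exact ⟨(ht₀.trans (hr₀ j)).le, hr₁ j hj⟩
  · simp only [T, Finset.mem_insert, Finset.mem_image, Finset.mem_range]
    rintro t (rfl | rfl | ⟨j, -, rfl⟩)
    exacts [hfa, hft₀, hfr j]
  · have ht₀T : t₀ ∉ (Finset.range (2 * n - 1)).image r := by
      simpa using fun j _ => (hr₀ j).ne'
    have haT : a ∉ insert t₀ ((Finset.range (2 * n - 1)).image r) := by
      simpa [ht₀.ne] using fun j _ => (ht₀.trans (hr₀ j)).ne'
    rw [Finset.card_insert_of_notMem haT, Finset.card_insert_of_notMem ht₀T,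
      Finset.card_image_of_injective _ hr_mono.injective, Finset.card_range]
    omega

lemma mul_sin_sub_ne_zero (hf : IsTrigPoly n f) {μ : ℝ} (hμ : ∀ t, |f t| < |μ|) {a t₀ : ℝ}
    (hft₀ : f t₀ = 0) (hat₀ : a < t₀) (hna : t₀ - π / (2 * n) < a) :
    μ * Real.sin (n * (a - t₀)) - f a ≠ 0 := by
  have hn₀ : 0 < n := Nat.pos_of_ne_zero fun h => by simp [h] at hna; linarith
  have hn : (0 : ℝ) < n := Nat.cast_pos.2 hn₀
  set g := fun t => μ * Real.sin (n * (t - t₀)) - f t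
  -- at the extrema `q j` of its sine term, `g` has the sign of `μ * (-1) ^ j`
  set q : ℕ → ℝ := fun j => t₀ + (π / 2 + j * π) / n
  have hgq : ∀ j, g (q j) = μ * (-1) ^ j - f (q j) := fun j => by
    simp only [g, q, add_sub_cancel_left, mul_div_cancel₀ _ hn.ne', sin_add_nat_mul_pi,
      sin_pi_div_two, mul_one]
  have hq : StrictMono q := fun i j hij => by
    have : (i : ℝ) < j := by exact_mod_cast hij
    dsimp only [q]
    gcongr
  have hq_last : q (2 * n - 1) = t₀ - π / (2 * n) + 2 * π := by
    simp only [q, Nat.cast_sub (by omega : 1 ≤ 2 * n)]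
    field_simp
    push_cast
    ring
  intro hga
  have hg : g = 0 := by
    refine ((isTrigPoly_mul_sin_nat_mul_sub n μ t₀).sub hf).eq_zero_of_sign_changes (f := g)
      hat₀ hga (by simp [g, hft₀]) hq (lt_add_of_pos_right _ (by positivity)) (by linarith)
      fun j => ?_
    rw [hgq, hgq, pow_succ, mul_neg_one, mul_neg]
    exact sub_mul_neg_sub_neg_of_abs_lt (by simpa using hμ _) (by simpa using hμ _)
  have hgq₀ : g (q 0) ≠ 0 := by
    rw [hgq, pow_zero, mul_one, sub_ne_zero]
    exact fun h => (hμ (q 0)).ne (by rw [h])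
  exact hgq₀ (congrFun hg (q 0))

theorem pi_div_two_mul_le_of_root (hf : IsTrigPoly n f) (hmax : ∀ t, |f t| ≤ |f 0|)
    (hf0 : f 0 ≠ 0) {t₀ : ℝ} (ht₀ : 0 < t₀) (hft₀ : f t₀ = 0) : π / (2 * n) ≤ t₀ := by
  by_contra! hlt
  have hn : (0 : ℝ) < n := Nat.cast_pos.2 <| Nat.pos_of_ne_zero fun h => by
    simp [h] at hlt; linarith
  have hnt₀ : n * t₀ < π / 2 := by
    rw [lt_div_iff₀ (by positivity)] at hlt; linarith
  set s := Real.sin (n * t₀)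
  have hs₀ : 0 < s := sin_pos_of_pos_of_lt_pi (by positivity) (by linarith [pi_pos])
  have hs₁ : s < 1 := by
    simpa using sin_lt_sin_of_lt_of_le_pi_div_two (by nlinarith [pi_pos]) le_rfl hnt₀
  refine hf.mul_sin_sub_ne_zero (μ := -f 0 / s) (fun t => (hmax t).trans_lt ?_) hft₀ ht₀
    (by linarith) ?_
  · rw [abs_div, abs_neg, abs_of_pos hs₀, lt_div_iff₀ hs₀]
    nlinarith [abs_pos.2 hf0]
  · rw [zero_sub, mul_neg, sin_neg]
    field_simp
    ring

end IsTrigPoly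

section InnerProductSpace

variable {E : Type*} [NormedAddCommGroup E] [InnerProductSpace ℝ E]

lemma exists_forall_inner_ne_zero {ι : Type*} [Finite ι] {v : ι → E} (hv : ∀ i, v i ≠ 0) :
    ∃ x : E, ∀ i, ⟪v i, x⟫ ≠ 0 :=
  Module.Dual.exists_forall_ne_zero_of_forall_exists (fun i => innerₛₗ ℝ (v i))
    fun i => ⟨v i, by simpa using hv i⟩

lemma norm_cos_smul_add_sin_smul {u w : E} (hu : ‖u‖ = 1) (hw : ‖w‖ = 1) (huw : ⟪u, w⟫ = 0)
    (t : ℝ) : ‖Real.cos t • u + Real.sin t • w‖ = 1 := by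
  rw [← pow_eq_one_iff_of_nonneg (norm_nonneg _) two_ne_zero, norm_add_sq_real, norm_smul,
    norm_smul, real_inner_smul_left, real_inner_smul_right, hu, hw, huw]
  simp [add_comm]

lemma isTrigPoly_prod_inner_cos_smul_add_sin_smul {n : ℕ} (v : Fin n → E) (u w : E) :
    IsTrigPoly n fun t => ∏ i, ⟪v i, Real.cos t • u + Real.sin t • w⟫ := by
  have := IsTrigPoly.prod Finset.univ (d := fun _ => 1)
    fun i _ => isTrigPoly_cos_add_sin ⟪v i, u⟫ ⟪v i, w⟫
  simpa [inner_add_right, real_inner_smul_right, mul_comm, Finset.prod_fn] using this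

lemma exists_norm_eq_one_inner_eq_zero_inner_cos_smul_add_sin_smul {u v : E} (hu : ‖u‖ = 1)
    (hv : ‖v‖ = 1) (hvu : |⟪v, u⟫| < 1) :
    ∃ w : E, ‖w‖ = 1 ∧ ⟪u, w⟫ = 0 ∧
      ⟪v, Real.cos (arcsin |⟪v, u⟫|) • u + Real.sin (arcsin |⟪v, u⟫|) • w⟫ = 0 := by
  set c := ⟪v, u⟫ with hcdef
  have hc : c ^ 2 < 1 := by rw [← sq_abs]; nlinarith [abs_nonneg c]
  set r := √(1 - c ^ 2)
  have hr : 0 < r := sqrt_pos.2 (by linarith)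
  have hr2 : r ^ 2 = 1 - c ^ 2 := sq_sqrt (by linarith)
  have hvcu : ‖v - c • u‖ = r := by
    have : ‖v - c • u‖ ^ 2 = r ^ 2 := by
      rw [hr2, norm_sub_sq_real, norm_smul, real_inner_smul_right, hv, hu, norm_eq_abs, ← hcdef]
      simp only [mul_pow, sq_abs]
      ring
    exact (pow_left_inj₀ (norm_nonneg _) hr.le two_ne_zero).1 this
  set w := r⁻¹ • (v - c • u)
  have hw : ‖w‖ = 1 := by
    rw [norm_smul, hvcu, norm_inv, norm_eq_abs, abs_of_pos hr, inv_mul_cancel₀ hr.ne']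
  have huw : ⟪u, w⟫ = 0 := by
    rw [real_inner_smul_right, inner_sub_right, real_inner_smul_right,
      real_inner_self_eq_norm_sq, hu, real_inner_comm]
    ring
  have hvw : ⟪v, w⟫ = r := by
    rw [real_inner_smul_right, inner_sub_right, real_inner_smul_right,
      real_inner_self_eq_norm_sq, hv, ← hcdef]
    field_simp
    linear_combination -hr2
  have hcos : Real.cos (arcsin |c|) = r := by rw [cos_arcsin, sq_abs]
  have hsin : Real.sin (arcsin |c|) = |c| := sin_arcsin (by linarith [abs_nonneg c]) hvu.le
  rcases le_or_gt 0 c with hc₀ | hc₀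
  · refine ⟨-w, by rwa [norm_neg], by rw [inner_neg_right, huw, neg_zero], ?_⟩
    rw [inner_add_right, real_inner_smul_right, real_inner_smul_right, inner_neg_right, hvw, hcos,
      hsin, abs_of_nonneg hc₀]
    ring
  · refine ⟨w, hw, huw, ?_⟩
    rw [inner_add_right, real_inner_smul_right, real_inner_smul_right, hvw, hcos, hsin,
      abs_of_neg hc₀]
    ring

theorem exists_norm_eq_one_forall_sin_le_abs_inner [FiniteDimensional ℝ E] {n : ℕ} (hn : 1 ≤ n)
    (v : Fin n → E) (hv : ∀ k, ‖v k‖ = 1) :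
    ∃ u : E, ‖u‖ = 1 ∧ ∀ k, Real.sin (π / (2 * n)) ≤ |⟪v k, u⟫| := by
  have hv₀ : ∀ k, v k ≠ 0 := fun k => norm_ne_zero_iff.1 (by simp [hv k])
  obtain ⟨u, hu, hmax⟩ := (isCompact_sphere (0 : E) 1).exists_isMaxOn
    ⟨v ⟨0, hn⟩, by simp [hv]⟩ (f := fun x => |∏ i, ⟪v i, x⟫|) (by fun_prop)
  rw [mem_sphere_zero_iff_norm] at hu
  have hprod : ∏ i, ⟪v i, u⟫ ≠ 0 := by
    obtain ⟨x, hx⟩ := exists_forall_inner_ne_zero hv₀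
    have hx₀ : x ≠ 0 := by rintro rfl; exact hx ⟨0, hn⟩ (inner_zero_right _)
    have hx₁ := mem_sphere_zero_iff_norm.2 (norm_smul_inv_norm (𝕜 := ℝ) hx₀)
    refine abs_pos.1 (lt_of_lt_of_le ?_ (hmax hx₁))
    simp only [real_inner_smul_right]
    exact abs_pos.2 (Finset.prod_ne_zero_iff.2 fun i _ => mul_ne_zero (by simpa using hx₀) (hx i))
  refine ⟨u, hu, fun k => ?_⟩
  by_contra! hk
  have hc₀ : ⟪v k, u⟫ ≠ 0 := fun h => hprod (Finset.prod_eq_zero (Finset.mem_univ k) h)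
  obtain ⟨w, hw, huw, hroot⟩ := exists_norm_eq_one_inner_eq_zero_inner_cos_smul_add_sin_smul hu
    (hv k) (hk.trans_le (sin_le_one _))
  set f := fun t : ℝ => ∏ i, ⟪v i, Real.cos t • u + Real.sin t • w⟫
  have hf : IsTrigPoly n f := isTrigPoly_prod_inner_cos_smul_add_sin_smul v u w
  have hf₀ : f 0 = ∏ i, ⟪v i, u⟫ := by simp [f]
  have hθ := hf.pi_div_two_mul_le_of_root
    (fun t => hf₀ ▸ hmax (mem_sphere_zero_iff_norm.2 (norm_cos_smul_add_sin_smul hu hw huw t)))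
    (hf₀ ▸ hprod) (arcsin_pos.2 (abs_pos.2 hc₀)) (Finset.prod_eq_zero (Finset.mem_univ k) hroot)
  have := sin_le_sin_of_le_of_le_pi_div_two
    (by linarith [show 0 ≤ π / (2 * n) by positivity, pi_pos]) (arcsin_le_pi_div_two _) hθ
  rw [sin_arcsin (by linarith [abs_nonneg ⟪v k, u⟫]) (hk.trans_le (sin_le_one _)).le] at this
  linarith

end InnerProductSpace

theorem zone_conjecture {H : Type*} [NormedAddCommGroup H] [InnerProductSpace ℝ H]
    (n : ℕ) (hn : 1 ≤ n) (v : Fin n → H) (hv : ∀ k, ‖v k‖ = 1) :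
    ∃ u : H, ‖u‖ = 1 ∧ ∀ k, |(inner ℝ (v k) u : ℝ)| ≥ Real.sin (π / (2 * n)) := by
  let E := Submodule.span ℝ (Set.range v)
  have : FiniteDimensional ℝ E := FiniteDimensional.span_of_finite ℝ (Set.finite_range v)
  obtain ⟨u, hu, hvu⟩ := exists_norm_eq_one_forall_sin_le_abs_inner hn
    (fun k => (⟨v k, Submodule.subset_span (Set.mem_range_self k)⟩ : E)) (by simpa using hv)
  exact ⟨u, by simpa using hu, fun k => by simpa using hvu k⟩
end

section
/- For any sequence of unit vectors v_1,...,v_n in a real inner product space H, there exists a vector v in H of norm √n such that |⟨v_k, v⟩| ≥ √n · sin(π/(2n)) for all k. -/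
/-!
Maximise `|∏ j, ⟪v j, u⟫|` over the unit sphere of the span of the `v j`; the maximum is
positive. At a maximiser `u`, fix `i` and follow the great circle `θ ↦ cos θ • u + sin θ • e`
from `u` towards `v i`. Along it the product is a trigonometric polynomial `T` of degree `n` with
`|T| ≤ |T 0|`. Normalising `T 0 > 0`, such a `T` satisfies `T 0 * cos (n θ) ≤ T θ` on
`(0, π / n)`: otherwise `T 0 * cos (n θ) - T θ`, whose sign alternates at the points `k π / n`,
has so many zeros that by Rolle its derivative, a trigonometric polynomial of degree `n`, has
`2n + 1` zeros in one period and vanishes identically. So `T` has no zero in `|θ| < π / (2n)`,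
while the factor `⟪v i, ·⟫` vanishes at `θ = -arcsin ⟪v i, u⟫`; hence
`|⟪v i, u⟫| ≥ sin (π / (2n))`, and `√n • u` is the required vector.
-/

open Real RealInnerProductSpace

open Polynomial Set

theorem Polynomial.natDegree_X_mul_derivative_le {R : Type*} [Semiring R] (p : R[X]) :
    (X * derivative p).natDegree ≤ p.natDegree := by
  rcases Nat.eq_zero_or_pos p.natDegree with h | h
  · simp [derivative_of_natDegree_zero h]
  · have := p.natDegree_derivative_le
    have := natDegree_X_le (R := R)
    exact natDegree_mul_le.trans (by omega)

theorem hasDerivAt_exp_ofReal_mul (c : ℂ) (θ : ℝ) :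
    HasDerivAt (fun t : ℝ ↦ Complex.exp (t * c)) (c * Complex.exp (θ * c)) θ := by
  simpa [mul_comm] using ((hasDerivAt_id θ).ofReal_comp.mul_const c).cexp

theorem exists_mem_Icc_eq_zero_of_mul_nonpos {f : ℝ → ℝ} {a b : ℝ} (hf : ContinuousOn f (Icc a b))
    (hab : a ≤ b) (h : f a * f b ≤ 0) : ∃ x ∈ Icc a b, f x = 0 := by
  have h0 : (0 : ℝ) ∈ uIcc (f a) (f b) := mem_uIcc.2 ((mul_nonpos_iff.1 h).symm.imp id And.symm)
  rw [← uIcc_of_le hab] at hf ⊢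
  exact intermediate_value_uIcc hf h0

theorem hasDerivAt_eq_zero_of_forall_abs_le {f : ℝ → ℝ} {f' t : ℝ} (hf : HasDerivAt f f' t)
    (h : ∀ θ, |f θ| ≤ |f t|) : f' = 0 := by
  rcases le_total 0 (f t) with ht | ht
  · refine IsLocalMax.hasDerivAt_eq_zero (Filter.Eventually.of_forall fun θ ↦ ?_) hf
    exact (le_abs_self _).trans ((h θ).trans_eq (abs_of_nonneg ht))
  · refine IsLocalMin.hasDerivAt_eq_zero (Filter.Eventually.of_forall fun θ ↦ ?_) hf
    linarith [neg_abs_le (f θ), h θ, abs_of_nonpos ht]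

theorem exists_finset_deriv_eq_zero_of_alternating {f f' : ℝ → ℝ}
    (hf : ∀ t, HasDerivAt f (f' t) t) {g : ℕ → ℝ} (hg : StrictMono g)
    (hsign : ∀ k, 0 ≤ (-1) ^ k * f (g k)) (hcrit : ∀ k, f (g k) = 0 → f' (g k) = 0)
    {a : ℝ} (ha : f a = 0) (hag : a < g 0) (m : ℕ) {b : ℝ} (hb : f b = 0) (hgb : g m ≤ b) :
    ∃ s : Finset ℝ, s.card = m + 1 ∧ ↑s ⊆ Ioc a b ∧ ∀ t ∈ s, f' t = 0 := by
  have hcont : Continuous f := continuous_iff_continuousAt.2 fun t ↦ (hf t).continuousAt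
  have rolle {x y : ℝ} (hxy : x < y) (hx : f x = 0) (hy : f y = 0) : ∃ c ∈ Ioo x y, f' c = 0 :=
    exists_hasDerivAt_eq_zero hxy hcont.continuousOn (hx.trans hy.symm) fun t _ ↦ hf t
  -- The extra clause keeps the critical point found at `b` out of the next step's finset.
  suffices ∀ m b, f b = 0 → g m ≤ b → ∃ s : Finset ℝ, s.card = m + 1 ∧ ↑s ⊆ Ioc a b ∧
      (∀ t ∈ s, f' t = 0) ∧ ∀ t ∈ s, t < b ∨ t = g m by
    obtain ⟨s, hcard, hsub, hs, -⟩ := this m b hb hgb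
    exact ⟨s, hcard, hsub, hs⟩
  intro m
  induction m with
  | zero =>
    intro b hb hgb
    obtain ⟨c, hc, hc0⟩ := rolle (hag.trans_le hgb) ha hb
    exact ⟨{c}, rfl, by simpa using ⟨hc.1, hc.2.le⟩, by simpa using hc0, by simp [hc.2]⟩
  | succ m ih =>
    intro b hb hgb
    have hprod : f (g m) * f (g (m + 1)) ≤ 0 := by
      have h := mul_nonneg (hsign m) (hsign (m + 1))
      rcases neg_one_pow_eq_or ℝ m with h' | h' <;> rw [pow_succ, h'] at h <;> linarith
    obtain ⟨x, hx, hx0⟩ :=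
      exists_mem_Icc_eq_zero_of_mul_nonpos hcont.continuousOn (hg (Nat.lt_succ_self m)).le hprod
    obtain ⟨s, hcard, hsub, hs, hslt⟩ := ih x hx0 hx.1
    obtain ⟨y, hxy, hyb, hy0, hsy, hyb'⟩ : ∃ y, x ≤ y ∧ y ≤ b ∧ f' y = 0 ∧ (∀ t ∈ s, t < y) ∧
        (y < b ∨ y = g (m + 1)) := by
      rcases (hx.2.trans hgb).lt_or_eq with hxb | rfl
      · obtain ⟨c, hc, hc0⟩ := rolle hxb hx0 hb
        exact ⟨c, hc.1.le, hc.2.le, hc0, fun t ht ↦ (hsub ht).2.trans_lt hc.1, Or.inl hc.2⟩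
      · have hxg : x = g (m + 1) := le_antisymm hx.2 hgb
        refine ⟨x, le_rfl, le_rfl, hxg ▸ hcrit _ (hxg ▸ hx0), fun t ht ↦ ?_, Or.inr hxg⟩
        rcases hslt t ht with h | rfl
        · exact h
        · exact hxg ▸ hg (Nat.lt_succ_self m)
    have hys : y ∉ s := fun h ↦ (hsy y h).false
    refine ⟨Finset.cons y s hys, by rw [Finset.card_cons, hcard], ?_,
      (Finset.forall_mem_cons hys _).2 ⟨hy0, hs⟩,
      (Finset.forall_mem_cons hys _).2 ⟨hyb', fun t ht ↦ Or.inl ((hsy t ht).trans_le hyb)⟩⟩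
    rw [Finset.coe_cons, insert_subset_iff]
    exact ⟨⟨hag.trans_le ((hg.monotone m.zero_le).trans (hx.1.trans hxy)), hyb⟩,
      hsub.trans (Ioc_subset_Ioc_right (hxy.trans hyb))⟩

theorem exists_finset_deriv_eq_zero_of_nodes {S S' : ℝ → ℝ} (hS : ∀ θ, HasDerivAt S (S' θ) θ)
    {n : ℕ} (hn : 0 < n) (hnode : ∀ k : ℕ, 0 ≤ (-1) ^ k * S (k * π / n))
    (hcrit : ∀ k : ℕ, S (k * π / n) = 0 → S' (k * π / n) = 0) (hS0 : S 0 = 0)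
    (hS2π : S (2 * π) = 0) {z : ℝ} (hz0 : 0 < z) (hz : z < π / n) (hSz : 0 < S z) :
    ∃ s : Finset ℝ, s.card = 2 * n + 1 ∧ ↑s ⊆ Ioc 0 (2 * π) ∧ ∀ t ∈ s, S' t = 0 := by
  set g : ℕ → ℝ := fun k ↦ if k = 0 then z else k * π / n
  have hg : StrictMono g := by
    refine strictMono_nat_of_lt_succ fun k ↦ ?_
    rcases Nat.eq_zero_or_pos k with rfl | hk
    · simpa [g] using hz
    · simp only [g, if_neg hk.ne', if_neg k.succ_ne_zero]
      gcongr
      linarith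
  have hgsign (k : ℕ) : 0 ≤ (-1) ^ k * S (g k) := by
    rcases k with _ | k
    · simpa [g] using hSz.le
    · simpa [g] using hnode (k + 1)
  have hgcrit (k : ℕ) (hk : S (g k) = 0) : S' (g k) = 0 := by
    simp only [g] at hk ⊢
    split_ifs at hk ⊢
    · exact absurd hk hSz.ne'
    · exact hcrit k hk
  have hg2π : g (2 * n) = 2 * π := by
    simp only [g, if_neg (by omega : 2 * n ≠ 0)]
    push_cast
    field_simp
  exact exists_finset_deriv_eq_zero_of_alternating hS hg hgsign hgcrit hS0 hz0 (2 * n) hS2π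
    hg2π.le

namespace ZoneConjecture

/-- `f` is a real trigonometric polynomial of degree at most `n`: `f θ * e^{inθ}` is a complex
polynomial of degree at most `2n` in `e^{iθ}`. -/
def IsTrigPoly (n : ℕ) (f : ℝ → ℝ) : Prop :=
  ∃ P : ℂ[X], P.natDegree ≤ 2 * n ∧
    ∀ θ : ℝ, (f θ : ℂ) * Complex.exp (θ * Complex.I) ^ n = P.eval (Complex.exp (θ * Complex.I))

theorem isTrigPoly_const (c : ℝ) : IsTrigPoly 0 fun _ ↦ c :=
  ⟨C (c : ℂ), by simp, fun θ ↦ by simp⟩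

theorem isTrigPoly_cos_add_sin (a b : ℝ) (k : ℕ) :
    IsTrigPoly k fun θ ↦ a * cos (k * θ) + b * sin (k * θ) := by
  refine ⟨C ((a - b * Complex.I) / 2) * X ^ (2 * k) + C ((a + b * Complex.I) / 2),
    by compute_degree, fun θ ↦ ?_⟩
  simp only [eval_add, eval_mul, eval_C, eval_pow, eval_X, pow_mul']
  rw [Complex.exp_mul_I, Complex.cos_add_sin_mul_I_pow]
  push_cast
  linear_combination ((a + b * Complex.I) / 2) * Complex.cos_sq_add_sin_sq (k * θ) +
    (b * Complex.cos (k * θ) * Complex.sin (k * θ) + b * Complex.sin (k * θ) ^ 2 * Complex.I / 2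
      - a * Complex.sin (k * θ) ^ 2 / 2) * Complex.I_sq

namespace IsTrigPoly

variable {m n : ℕ} {f g T : ℝ → ℝ}

theorem mul (hf : IsTrigPoly m f) (hg : IsTrigPoly n g) :
    IsTrigPoly (m + n) fun θ ↦ f θ * g θ := by
  obtain ⟨P, hP, hPf⟩ := hf
  obtain ⟨Q, hQ, hQg⟩ := hg
  refine ⟨P * Q, natDegree_mul_le.trans (by omega), fun θ ↦ ?_⟩
  rw [eval_mul, ← hPf, ← hQg]
  push_cast
  ring

theorem const_mul (c : ℝ) (hf : IsTrigPoly n f) : IsTrigPoly n fun θ ↦ c * f θ := by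
  simpa using (isTrigPoly_const c).mul hf

theorem sub (hf : IsTrigPoly n f) (hg : IsTrigPoly n g) : IsTrigPoly n fun θ ↦ f θ - g θ := by
  obtain ⟨P, hP, hPf⟩ := hf
  obtain ⟨Q, hQ, hQg⟩ := hg
  refine ⟨P - Q, (natDegree_sub_le_of_le hP hQ).trans_eq (max_self _), fun θ ↦ ?_⟩
  rw [eval_sub, ← hPf, ← hQg]
  push_cast
  ring

theorem prod {ι : Type*} {s : Finset ι} {d : ι → ℕ} {F : ι → ℝ → ℝ}
    (hF : ∀ j ∈ s, IsTrigPoly (d j) (F j)) :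
    IsTrigPoly (∑ j ∈ s, d j) fun θ ↦ ∏ j ∈ s, F j θ := by
  classical
  induction s using Finset.induction_on with
  | empty => simpa using isTrigPoly_const 1
  | insert i s hi ih =>
    simp only [Finset.sum_insert hi, Finset.prod_insert hi]
    exact (hF i (Finset.mem_insert_self i s)).mul
      (ih fun j hj ↦ hF j (Finset.mem_insert_of_mem hj))

theorem comp_neg (hf : IsTrigPoly n f) : IsTrigPoly n fun θ ↦ f (-θ) := by
  obtain ⟨P, hP, hPf⟩ := hf
  refine ⟨P.map (starRingEnd ℂ), (natDegree_map_le).trans hP, fun θ ↦ ?_⟩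
  have hconj : starRingEnd ℂ (Complex.exp (↑(-θ) * Complex.I)) = Complex.exp (θ * Complex.I) := by
    rw [← Complex.exp_conj]
    congr 1
    simp
  rw [eval_map, ← hconj, eval₂_at_apply, ← hPf, map_mul, map_pow, hconj, Complex.conj_ofReal]

theorem periodic (hf : IsTrigPoly n f) : Function.Periodic f (2 * π) := fun θ ↦ by
  obtain ⟨P, -, hPf⟩ := hf
  have hE : Complex.exp (↑(θ + 2 * π) * Complex.I) = Complex.exp (θ * Complex.I) := by
    push_cast
    exact Complex.exp_mul_I_periodic θ
  have h := (hPf (θ + 2 * π)).trans ((congrArg P.eval hE).trans (hPf θ).symm)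
  rw [hE] at h
  exact_mod_cast mul_right_cancel₀ (pow_ne_zero _ (Complex.exp_ne_zero _)) h

theorem exists_hasDerivAt (hf : IsTrigPoly n f) :
    ∃ f' : ℝ → ℝ, (∀ θ, HasDerivAt f (f' θ) θ) ∧ IsTrigPoly n f' := by
  -- Differentiate `f θ = P (e^{iθ}) e^{-inθ}` over `ℂ`; the derivative is real since `f` is.
  obtain ⟨P, hP, hPf⟩ := hf
  set E : ℝ → ℂ := fun t ↦ Complex.exp (t * Complex.I)
  set c : ℂ := -(n * Complex.I)
  set Q : ℂ[X] := C Complex.I * (X * derivative P - C (n : ℂ) * P)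
  set G : ℝ → ℂ := fun θ ↦ Q.eval (E θ) * Complex.exp (θ * c)
  have hEc (θ : ℝ) : E θ ^ n * Complex.exp (θ * c) = 1 := by
    rw [← Complex.exp_nat_mul, ← Complex.exp_add, ← Complex.exp_zero]
    congr 1
    ring
  have hfE : (fun t ↦ (f t : ℂ)) = fun t ↦ P.eval (E t) * Complex.exp (t * c) := by
    ext t
    rw [← hPf, mul_assoc, hEc, mul_one]
  have hderiv (θ : ℝ) : HasDerivAt (fun t ↦ (f t : ℂ)) (G θ) θ := by
    rw [hfE]
    have hPE : HasDerivAt (fun t ↦ P.eval (E t))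
        ((derivative P).eval (E θ) * (Complex.I * E θ)) θ :=
      (P.hasDerivAt (E θ)).comp θ (hasDerivAt_exp_ofReal_mul Complex.I θ)
    refine (hPE.mul (hasDerivAt_exp_ofReal_mul c θ)).congr_deriv ?_
    simp only [G, Q, c, eval_mul, eval_sub, eval_C, eval_X]
    ring
  have hre (θ : ℝ) : HasDerivAt f (G θ).re θ := by
    have h := Complex.reCLM.hasFDerivAt.comp_hasDerivAt θ (hderiv θ)
    simp only [Function.comp_def, Complex.reCLM_apply, Complex.ofReal_re] at h
    convert h
  have hG (θ : ℝ) : ((G θ).re : ℂ) = G θ := (hre θ).ofReal_comp.unique (hderiv θ)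
  refine ⟨fun θ ↦ (G θ).re, hre, Q, ?_, fun θ ↦ ?_⟩
  · refine natDegree_C_mul_le _ _ |>.trans <| natDegree_sub_le_of_le
      ((natDegree_X_mul_derivative_le P).trans hP) (natDegree_C_mul_le _ _ |>.trans hP) |>.trans ?_
    simp
  · rw [hG, mul_assoc, mul_comm (Complex.exp _), hEc, mul_one]

theorem eq_zero_of_lt_card (hf : IsTrigPoly n f) {a : ℝ} {s : Finset ℝ}
    (hs : ↑s ⊆ Ioc a (a + 2 * π)) (hzero : ∀ t ∈ s, f t = 0) (hcard : 2 * n < s.card) (θ : ℝ) :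
    f θ = 0 := by
  obtain ⟨P, hP, hPf⟩ := hf
  have hinj : Function.Injective fun t : s ↦ Complex.exp ((t : ℝ) * Complex.I) := by
    intro t t' h
    exact Subtype.ext <| Circle.exp_injOn_Ioc (by linarith) (hs t.2) (hs t'.2) (Subtype.ext h)
  have hP0 : P = 0 := eq_zero_of_natDegree_lt_card_of_eval_eq_zero P hinj
    (fun t ↦ by simp [← hPf, hzero t t.2]) (by simpa using hP.trans_lt hcard)
  simpa [hP0, Complex.exp_ne_zero] using hPf θ

theorem apply_zero_mul_cos_le (hT : IsTrigPoly n T) (hmax : ∀ θ, |T θ| ≤ T 0) {z : ℝ}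
    (hz0 : 0 < z) (hz : z < π / n) : T 0 * cos (n * z) ≤ T z := by
  by_contra! hTz
  -- `π / 0 = 0`, so `hz` forces `n ≠ 0`.
  have hn : 0 < n := Nat.pos_of_ne_zero fun h ↦ by simp [h] at hz; linarith
  obtain ⟨T', hT', hT'poly⟩ := hT.exists_hasDerivAt
  set M := T 0
  set S : ℝ → ℝ := fun θ ↦ M * cos (n * θ) - T θ
  set S' : ℝ → ℝ := fun θ ↦ -(M * n) * sin (n * θ) - T' θ
  have hS (θ : ℝ) : HasDerivAt S (S' θ) θ := by
    refine ((((hasDerivAt_id θ).const_mul (n : ℝ)).cos.const_mul M).sub (hT' θ)).congr_deriv ?_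
    simp only [S', id]
    ring
  have hS'poly : IsTrigPoly n S' := by
    have h := (isTrigPoly_cos_add_sin 0 (-(M * n)) n).sub hT'poly
    simp only [zero_mul, zero_add] at h
    exact h
  have hnk (k : ℕ) : n * (k * π / n) = k * π := by field_simp
  have hSk (k : ℕ) : S (k * π / n) = M * (-1) ^ k - T (k * π / n) := by
    simp only [S, hnk, cos_nat_mul_pi]
  have hnode (k : ℕ) : 0 ≤ (-1) ^ k * S (k * π / n) := by
    have h := (le_abs_self _).trans ((abs_mul _ _).trans_le
      (by simpa using hmax (k * π / n) : |(-1) ^ k| * |T (k * π / n)| ≤ M))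
    rw [hSk]
    rcases neg_one_pow_eq_or ℝ k with h' | h' <;> rw [h'] at h ⊢ <;> linarith
  have hcrit (k : ℕ) (hk : S (k * π / n) = 0) : S' (k * π / n) = 0 := by
    have hT'k : T' (k * π / n) = 0 := by
      refine hasDerivAt_eq_zero_of_forall_abs_le (hT' _) fun θ ↦ ?_
      rw [show T (k * π / n) = M * (-1) ^ k by linarith [hSk k], abs_mul,
        abs_of_nonneg ((abs_nonneg _).trans (hmax 0))]
      simpa using hmax θ
    simp only [S', hnk, sin_nat_mul_pi, hT'k]
    ring
  have hS2π : S (2 * π) = 0 := by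
    simp only [S, M]
    rw [cos_nat_mul_two_pi, ← zero_add (2 * π), hT.periodic 0]
    ring
  obtain ⟨s, hcard, hsub, hs⟩ := exists_finset_deriv_eq_zero_of_nodes hS hn hnode hcrit
    (by simp [S, M]) hS2π hz0 hz (by simp only [S]; linarith)
  have hS'0 := hS'poly.eq_zero_of_lt_card (a := 0) (by rwa [zero_add]) hs (by omega)
  have hSconst := is_const_of_deriv_eq_zero (fun θ ↦ (hS θ).differentiableAt)
    (fun θ ↦ (hS θ).deriv.trans (hS'0 θ)) z 0
  simp only [S, M, mul_zero, cos_zero, mul_one, sub_self] at hSconst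
  linarith

theorem pos_of_forall_abs_le (hT : IsTrigPoly n T) (hmax : ∀ θ, |T θ| ≤ T 0) (hpos : 0 < T 0)
    {z : ℝ} (hz0 : 0 < z) (hz : z < π / (2 * n)) : 0 < T z := by
  have hn : (0 : ℝ) < n := Nat.cast_pos.2 <| Nat.pos_of_ne_zero fun h ↦ by simp [h] at hz; linarith
  have hnz : n * z < π / 2 := by
    rw [lt_div_iff₀ (by positivity)] at hz
    linarith
  have hcos : 0 < cos (n * z) := cos_pos_of_mem_Ioo ⟨by nlinarith [pi_pos], hnz⟩
  refine (mul_pos hpos hcos).trans_le (hT.apply_zero_mul_cos_le hmax hz0 ?_)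
  calc z < π / (2 * n) := hz
    _ ≤ π / n := div_le_div_of_nonneg_left pi_pos.le hn (by linarith)

theorem apply_ne_zero_of_forall_abs_le (hT : IsTrigPoly n T) (hmax : ∀ θ, |T θ| ≤ |T 0|)
    (h0 : T 0 ≠ 0) {z : ℝ} (hz : |z| < π / (2 * n)) : T z ≠ 0 := by
  set U : ℝ → ℝ := fun θ ↦ T 0 * T θ
  have hU : IsTrigPoly n U := hT.const_mul (T 0)
  have hUpos : 0 < U 0 := mul_self_pos.2 h0
  have hUmax (θ : ℝ) : |U θ| ≤ U 0 := by
    show |T 0 * T θ| ≤ T 0 * T 0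
    rw [abs_mul, ← abs_mul_abs_self (T 0)]
    exact mul_le_mul_of_nonneg_left (hmax θ) (abs_nonneg _)
  have hUz : 0 < U z := by
    rcases lt_trichotomy z 0 with hz0 | rfl | hz0
    · rw [abs_of_neg hz0] at hz
      simpa using hU.comp_neg.pos_of_forall_abs_le (fun θ ↦ by simpa using hUmax (-θ))
        (by simpa using hUpos) (neg_pos.2 hz0) hz
    · exact hUpos
    · rw [abs_of_pos hz0] at hz
      exact hU.pos_of_forall_abs_le hUmax hUpos hz0 hz
  exact right_ne_zero_of_mul hUz.ne'

end IsTrigPoly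

section Geometry

variable {H : Type*} [NormedAddCommGroup H] [InnerProductSpace ℝ H]

theorem norm_cos_smul_add_sin_smul {u e : H} (hu : ‖u‖ = 1) (he : ‖e‖ = 1) (hue : ⟪u, e⟫ = 0)
    (θ : ℝ) : ‖cos θ • u + sin θ • e‖ = 1 := by
  have h : ‖cos θ • u + sin θ • e‖ ^ 2 = 1 := by
    rw [norm_add_sq_real, norm_smul, norm_smul, real_inner_smul_left, real_inner_smul_right, hue,
      hu, he, norm_eq_abs, norm_eq_abs]
    nlinarith [sq_abs (cos θ), sq_abs (sin θ), cos_sq_add_sin_sq θ]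
  rw [← sqrt_sq (norm_nonneg _), h, sqrt_one]

theorem exists_orthogonal_unit {W : Submodule ℝ H} {x u : H} (hxW : x ∈ W) (huW : u ∈ W)
    (hx : ‖x‖ = 1) (hu : ‖u‖ = 1) (hxu : |⟪x, u⟫| < 1) :
    ∃ e ∈ W, ‖e‖ = 1 ∧ ⟪u, e⟫ = 0 ∧ ⟪x, e⟫ = √(1 - ⟪x, u⟫ ^ 2) := by
  set a := ⟪x, u⟫
  set p := x - a • u
  have hxp : ⟪x, p⟫ = 1 - a ^ 2 := by
    rw [inner_sub_right, real_inner_smul_right, real_inner_self_eq_norm_sq, hx]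
    ring
  have hp2 : ‖p‖ ^ 2 = 1 - a ^ 2 := by
    rw [← real_inner_self_eq_norm_sq, inner_sub_left, hxp, real_inner_smul_left, inner_sub_right,
      real_inner_smul_right, real_inner_comm, real_inner_self_eq_norm_sq, hu]
    ring
  have hp0 : 0 < ‖p‖ := by
    refine norm_pos_iff.2 fun h ↦ ?_
    rw [h, norm_zero] at hp2
    nlinarith [abs_lt.1 hxu]
  refine ⟨‖p‖⁻¹ • p, W.smul_mem _ (W.sub_mem hxW (W.smul_mem _ huW)), ?_, ?_, ?_⟩
  · rw [norm_smul, norm_inv, norm_norm, inv_mul_cancel₀ hp0.ne']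
  · rw [real_inner_smul_right, inner_sub_right, real_inner_smul_right, real_inner_comm,
      real_inner_self_eq_norm_sq, hu]
    ring
  · rw [real_inner_smul_right, hxp, ← hp2, sqrt_sq (norm_nonneg _)]
    field_simp

theorem exists_mem_forall_inner_ne_zero {ι : Type*} [Finite ι] (W : Submodule ℝ H) {v : ι → H}
    (hvW : ∀ j, v j ∈ W) (hv : ∀ j, v j ≠ 0) : ∃ w ∈ W, ∀ j, ⟪v j, w⟫ ≠ 0 := by
  by_contra! h
  obtain ⟨j, hj⟩ := Subspace.exists_eq_top_of_iUnion_eq_univ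
    (p := fun j ↦ LinearMap.ker ((innerₛₗ ℝ (v j)).domRestrict W)) <|
    eq_univ_of_forall fun w ↦ mem_iUnion.2 (h w w.2)
  have h' := hj ▸ Submodule.mem_top (x := (⟨v j, hvW j⟩ : W))
  simp [hv j] at h'

variable {ι : Type*} [Fintype ι]

theorem isTrigPoly_prod_inner (v : ι → H) (u e : H) :
    IsTrigPoly (Fintype.card ι) fun θ ↦ ∏ j, ⟪v j, cos θ • u + sin θ • e⟫ := by
  have h := IsTrigPoly.prod (s := Finset.univ) (d := fun _ ↦ 1)
    fun j _ ↦ isTrigPoly_cos_add_sin ⟪v j, u⟫ ⟪v j, e⟫ 1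
  simp only [Nat.cast_one, one_mul, Finset.sum_const, Finset.card_univ, smul_eq_mul,
    mul_one] at h
  simpa only [inner_add_right, real_inner_smul_right, mul_comm] using h

theorem exists_isMaxOn_abs_prod_inner [Nonempty ι] (W : Submodule ℝ H) [FiniteDimensional ℝ W]
    {v : ι → H} (hvW : ∀ j, v j ∈ W) (hv : ∀ j, v j ≠ 0) :
    ∃ u ∈ W, ‖u‖ = 1 ∧ ∏ j, ⟪v j, u⟫ ≠ 0 ∧
      IsMaxOn (fun w ↦ |∏ j, ⟪v j, w⟫|) (W ∩ Metric.sphere 0 1) u := by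
  obtain ⟨w, hwW, hw⟩ := exists_mem_forall_inner_ne_zero W hvW hv
  have hw0 : w ≠ 0 := fun h ↦ hw (Classical.arbitrary ι) (by simp [h])
  set w₁ : W := ⟨‖w‖⁻¹ • w, W.smul_mem _ hwW⟩
  have hw₁ : w₁ ∈ Metric.sphere (0 : W) 1 := by
    simp [w₁, norm_smul, norm_ne_zero_iff.2 hw0]
  obtain ⟨u, hu, humax⟩ := (isCompact_sphere (0 : W) 1).exists_isMaxOn ⟨w₁, hw₁⟩
    (Continuous.continuousOn (f := fun w : W ↦ |∏ j, ⟪v j, (w : H)⟫|) (by fun_prop))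
  have hw₁pos : 0 < |∏ j, ⟪v j, (w₁ : H)⟫| := abs_pos.2 <| Finset.prod_ne_zero_iff.2 fun j _ ↦ by
    simp [w₁, real_inner_smul_right, hw j, hw0]
  refine ⟨u, u.2, by simpa using hu, fun h ↦ hw₁pos.not_ge (by simpa [h] using humax hw₁),
    isMaxOn_iff.2 fun w ⟨hwW, hw1⟩ ↦ humax (a := ⟨w, hwW⟩) (by simpa using hw1)⟩

theorem sin_pi_div_le_abs_inner_of_isMaxOn {W : Submodule ℝ H} {v : ι → H} {u : H} (huW : u ∈ W)
    (hu : ‖u‖ = 1) (hne : ∏ j, ⟪v j, u⟫ ≠ 0)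
    (hmax : IsMaxOn (fun w ↦ |∏ j, ⟪v j, w⟫|) (W ∩ Metric.sphere 0 1) u)
    {i : ι} (hviW : v i ∈ W) (hvi : ‖v i‖ = 1) :
    sin (π / (2 * Fintype.card ι)) ≤ |⟪v i, u⟫| := by
  set a := ⟪v i, u⟫
  set y := π / (2 * Fintype.card ι)
  by_contra! ha
  have ha1 : a ∈ Icc (-1) 1 := abs_le.1 (ha.trans_le (sin_le_one y)).le
  obtain ⟨e, heW, he, hue, hie⟩ :=
    exists_orthogonal_unit hviW huW hvi hu (ha.trans_le (sin_le_one y))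
  set T : ℝ → ℝ := fun θ ↦ ∏ j, ⟪v j, cos θ • u + sin θ • e⟫
  have hT0 : T 0 = ∏ j, ⟪v j, u⟫ := by simp [T]
  have hTmax (θ : ℝ) : |T θ| ≤ |T 0| := hT0 ▸ isMaxOn_iff.1 hmax _
    ⟨W.add_mem (W.smul_mem _ huW) (W.smul_mem _ heW), by
      simpa using norm_cos_smul_add_sin_smul hu he hue θ⟩
  have hzero : T (-arcsin a) = 0 := Finset.prod_eq_zero (Finset.mem_univ i) <| by
    rw [inner_add_right, real_inner_smul_right, real_inner_smul_right, hie, cos_neg, sin_neg,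
      cos_arcsin, sin_arcsin ha1.1 ha1.2]
    ring
  have hy : y ∈ Icc (-(π / 2)) (π / 2) := by
    have : (1 : ℝ) ≤ Fintype.card ι := by exact_mod_cast Fintype.card_pos_iff.2 ⟨i⟩
    constructor
    · have : 0 ≤ y := by positivity
      linarith [pi_pos]
    · exact div_le_div_of_nonneg_left pi_pos.le two_pos (by linarith)
  refine (isTrigPoly_prod_inner v u e).apply_ne_zero_of_forall_abs_le hTmax (hT0.trans_ne hne) ?_
    hzero
  rw [abs_neg, abs_lt, lt_arcsin_iff_sin_lt ⟨by linarith [hy.2], by linarith [hy.1]⟩ ha1,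
    arcsin_lt_iff_lt_sin ha1 hy, sin_neg]
  constructor <;> linarith [abs_lt.1 ha]

theorem exists_norm_eq_one_forall_sin_pi_div_le_abs_inner [Nonempty ι] {v : ι → H}
    (hv : ∀ j, ‖v j‖ = 1) :
    ∃ u : H, ‖u‖ = 1 ∧ ∀ j, sin (π / (2 * Fintype.card ι)) ≤ |⟪v j, u⟫| := by
  set W := Submodule.span ℝ (range v)
  have : FiniteDimensional ℝ W := FiniteDimensional.span_of_finite ℝ (finite_range v)
  have hvW (j : ι) : v j ∈ W := Submodule.subset_span (mem_range_self j)
  obtain ⟨u, huW, hu, hne, hmax⟩ :=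
    exists_isMaxOn_abs_prod_inner W hvW fun j ↦ norm_ne_zero_iff.1 (by simp [hv j])
  exact ⟨u, hu, fun j ↦ sin_pi_div_le_abs_inner_of_isMaxOn huW hu hne hmax (hvW j) (hv j)⟩

end Geometry

end ZoneConjecture

theorem zone_conjecture_rescaled {H : Type*} [NormedAddCommGroup H] [InnerProductSpace ℝ H]
    (n : ℕ) (hn : 1 ≤ n) (v : Fin n → H) (hv : ∀ k, ‖v k‖ = 1) :
    ∃ u : H, ‖u‖ = Real.sqrt n ∧
      ∀ k, |(inner ℝ (v k) u : ℝ)| ≥ Real.sqrt n * Real.sin (π / (2 * n)) := by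
  have : Nonempty (Fin n) := ⟨⟨0, hn⟩⟩
  obtain ⟨u, hu, hvu⟩ := ZoneConjecture.exists_norm_eq_one_forall_sin_pi_div_le_abs_inner hv
  refine ⟨√n • u, by simp [norm_smul, hu], fun k ↦ ?_⟩
  rw [real_inner_smul_right, abs_mul, abs_of_nonneg (sqrt_nonneg _)]
  simpa using mul_le_mul_of_nonneg_left (hvu k) (sqrt_nonneg n)
end

section
/- Let v_1,...,v_n be unit vectors in a real inner product space H and let v be a vector with ‖v‖ = √n that maximizes the product ∏_{k=1}^n |⟨v_k, v⟩| over all vectors of norm √n, and suppose this maximum is positive. Then v = Σ_{k=1}^n (1/⟨v_k, v⟩) · v_k. -/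
/-!
At a maximiser `u`, the scale-invariant potential `log (∏ₖ |⟪vₖ, w⟫| / ‖w‖ⁿ)` has a local
maximum, so its gradient `∑ₖ ⟪vₖ, u⟫⁻¹ vₖ - (n / ‖u‖²) u` vanishes. Since `‖u‖² = n`, this is
`u = ∑ₖ ⟪vₖ, u⟫⁻¹ vₖ`.
-/

open Real

open Metric Filter Topology
open scoped RealInnerProductSpace

namespace InverseEigenvector

variable {E ι : Type*} [NormedAddCommGroup E] [InnerProductSpace ℝ E] [Fintype ι]

/-- `log (∏ₖ |⟪vₖ, w⟫| / ‖w‖ⁿ)`, using `Real.log x = Real.log |x|`. -/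
noncomputable def logPotential (v : ι → E) (w : E) : ℝ :=
  ∑ k, log ⟪v k, w⟫ - Fintype.card ι / 2 * log (‖w‖ ^ 2)

variable {v : ι → E}

theorem logPotential_smul {c : ℝ} (hc : c ≠ 0) {w : E} (hw : w ≠ 0) (hvw : ∀ k, ⟪v k, w⟫ ≠ 0) :
    logPotential v (c • w) = logPotential v w := by
  have hlog_sq : log (c ^ 2) = 2 * log c := by rw [log_pow]; norm_num
  simp only [logPotential, inner_smul_right, norm_smul, mul_pow, norm_eq_abs, sq_abs]
  rw [log_mul (pow_ne_zero 2 hc) (pow_ne_zero 2 (norm_ne_zero_iff.2 hw)), hlog_sq,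
    Finset.sum_congr rfl fun k _ => log_mul hc (hvw k), Finset.sum_add_distrib,
    Finset.sum_const, Finset.card_univ, nsmul_eq_mul]
  ring

theorem logPotential_le_of_isMaxOn {u : E} (hu : u ≠ 0)
    (hmax : IsMaxOn (fun w => ∏ k, |⟪v k, w⟫|) (sphere 0 ‖u‖) u) {w : E} (hw : w ≠ 0)
    (hvw : ∀ k, ⟪v k, w⟫ ≠ 0) : logPotential v w ≤ logPotential v u := by
  set c := ‖u‖ / ‖w‖
  have hc : c ≠ 0 := div_ne_zero (norm_ne_zero_iff.2 hu) (norm_ne_zero_iff.2 hw)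
  have hcw : ‖c • w‖ = ‖u‖ := by
    rw [norm_smul, norm_div, norm_norm, norm_norm, div_mul_cancel₀ _ (norm_ne_zero_iff.2 hw)]
  have hvcw : ∀ k, ⟪v k, c • w⟫ ≠ 0 := fun k => by
    rw [inner_smul_right]; exact mul_ne_zero hc (hvw k)
  have hprod : ∏ k, |⟪v k, c • w⟫| ≤ ∏ k, |⟪v k, u⟫| :=
    hmax (mem_sphere_zero_iff_norm.2 hcw)
  have hpos : 0 < ∏ k, |⟪v k, c • w⟫| := Finset.prod_pos fun k _ => abs_pos.2 (hvcw k)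
  have hvu : ∀ k ∈ Finset.univ, |⟪v k, u⟫| ≠ 0 :=
    Finset.prod_ne_zero_iff.1 (hpos.trans_le hprod).ne'
  have hlog := log_le_log hpos hprod
  rw [log_prod fun k _ => abs_ne_zero.2 (hvcw k), log_prod hvu] at hlog
  simp only [log_abs] at hlog
  rw [← logPotential_smul hc hw hvw, logPotential, logPotential, hcw]
  linarith

theorem isLocalMax_logPotential {u : E} (hu : u ≠ 0)
    (hmax : IsMaxOn (fun w => ∏ k, |⟪v k, w⟫|) (sphere 0 ‖u‖) u) (hvu : ∀ k, ⟪v k, u⟫ ≠ 0) :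
    IsLocalMax (logPotential v) u := by
  have hne : ∀ᶠ w in 𝓝 u, w ≠ 0 := continuousAt_id.eventually_ne hu
  have hvne : ∀ᶠ w in 𝓝 u, ∀ k, ⟪v k, w⟫ ≠ 0 := eventually_all.2 fun k =>
    ((innerSL ℝ (v k)).continuous.continuousAt (x := u)).eventually_ne (hvu k)
  filter_upwards [hne, hvne] with w hw hvw
  exact logPotential_le_of_isMaxOn hu hmax hw hvw

theorem hasFDerivAt_logPotential {u : E} (hu : u ≠ 0) (hvu : ∀ k, ⟪v k, u⟫ ≠ 0) :
    HasFDerivAt (logPotential v)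
      (∑ k, ⟪v k, u⟫⁻¹ • innerSL ℝ (v k) - (Fintype.card ι / ‖u‖ ^ 2) • innerSL ℝ u) u := by
  have hsum : HasFDerivAt (fun w => ∑ k, log ⟪v k, w⟫) (∑ k, ⟪v k, u⟫⁻¹ • innerSL ℝ (v k)) u :=
    HasFDerivAt.fun_sum fun k _ => ((innerSL ℝ (v k)).hasFDerivAt).log (hvu k)
  have hnorm := ((hasStrictFDerivAt_norm_sq u).hasFDerivAt.log
    (pow_ne_zero 2 (norm_ne_zero_iff.2 hu))).const_mul (Fintype.card ι / 2 : ℝ)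
  have hcoeff : (Fintype.card ι / ‖u‖ ^ 2) • innerSL ℝ u
      = (Fintype.card ι / 2 : ℝ) • (‖u‖ ^ 2)⁻¹ • (2 : ℕ) • innerSL ℝ u := by
    rw [← Nat.cast_smul_eq_nsmul ℝ, smul_smul, smul_smul]
    congr 1
    field_simp
    norm_num
  rw [hcoeff]
  exact hsum.sub hnorm

theorem sum_inv_inner_smul_eq_of_isMaxOn {u : E} (hu : u ≠ 0)
    (hmax : IsMaxOn (fun w => ∏ k, |⟪v k, w⟫|) (sphere 0 ‖u‖) u) (hvu : ∀ k, ⟪v k, u⟫ ≠ 0) :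
    ∑ k, ⟪v k, u⟫⁻¹ • v k = (Fintype.card ι / ‖u‖ ^ 2) • u := by
  have hcrit := (isLocalMax_logPotential hu hmax hvu).hasFDerivAt_eq_zero
    (hasFDerivAt_logPotential hu hvu)
  refine ext_inner_right ℝ fun h => ?_
  have hcrit_h := congrArg (· h) hcrit
  simp only [sub_apply, sum_apply, smul_apply, innerSL_apply_apply, smul_eq_mul, zero_apply,
    sub_eq_zero] at hcrit_h
  simpa only [sum_inner, real_inner_smul_left] using hcrit_h

end InverseEigenvector

theorem maximizer_is_inverse_eigenvector_general {H : Type*} [NormedAddCommGroup H]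
    [InnerProductSpace ℝ H]
    (n : ℕ) (hn : 1 ≤ n) (v : Fin n → H)
    (u : H) (hu : ‖u‖ = Real.sqrt n)
    (hmax : ∀ w : H, ‖w‖ = Real.sqrt n →
      ∏ k, |(inner ℝ (v k) w : ℝ)| ≤ ∏ k, |(inner ℝ (v k) u : ℝ)|)
    (hpos : 0 < ∏ k, |(inner ℝ (v k) u : ℝ)|) :
    u = ∑ k, ((inner ℝ (v k) u : ℝ))⁻¹ • v k := by
  have hn0 : (0 : ℝ) < n := by exact_mod_cast hn
  have hu0 : u ≠ 0 := norm_pos_iff.1 (hu ▸ sqrt_pos.2 hn0)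
  have hvu : ∀ k, ⟪v k, u⟫ ≠ 0 := fun k =>
    abs_ne_zero.1 (Finset.prod_ne_zero_iff.1 hpos.ne' k (Finset.mem_univ k))
  have hmax_sphere : IsMaxOn (fun w => ∏ k, |⟪v k, w⟫|) (sphere 0 ‖u‖) u := fun w hw =>
    hmax w (hu ▸ mem_sphere_zero_iff_norm.1 hw)
  rw [InverseEigenvector.sum_inv_inner_smul_eq_of_isMaxOn hu0 hmax_sphere hvu, hu,
    sq_sqrt hn0.le, Fintype.card_fin, div_self hn0.ne', one_smul]

theorem maximizer_is_inverse_eigenvector {H : Type*} [NormedAddCommGroup H]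
    [InnerProductSpace ℝ H] [FiniteDimensional ℝ H]
    (n : ℕ) (hn : 1 ≤ n) (v : Fin n → H) (hv : ∀ k, ‖v k‖ = 1)
    (u : H) (hu : ‖u‖ = Real.sqrt n)
    (hmax : ∀ w : H, ‖w‖ = Real.sqrt n →
      ∏ k, |(inner ℝ (v k) w : ℝ)| ≤ ∏ k, |(inner ℝ (v k) u : ℝ)|)
    (hpos : 0 < ∏ k, |(inner ℝ (v k) u : ℝ)|) :
    u = ∑ k, ((inner ℝ (v k) u : ℝ))⁻¹ • v k :=
  maximizer_is_inverse_eigenvector_general n hn v u hu hmax hpos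
end

section
/- Let H be an n×n real symmetric positive semidefinite matrix (a Gram matrix) and let Q be an open quadrant of ℝⁿ (a set of vectors with prescribed nonzero signs in each coordinate). Then there is at most one inverse eigenvector of H in Q, i.e., at most one w ∈ Q with (Hw)_j = 1/w_j for all j. -/
/-!
Two vectors in the same open quadrant have coordinatewise products `w₁ j * w₂ j > 0`, and on
such pairs inversion is strictly order-reversing: `(a - b) (a⁻¹ - b⁻¹) = -(a - b)² / (a b) < 0`
unless `a = b`. So for two inverse eigenvectors the quadratic form of `H` at `w₁ - w₂`, which
equals `∑ j (w₁ j - w₂ j) ((w₁ j)⁻¹ - (w₂ j)⁻¹)`, is negative unless `w₁ = w₂`, contradicting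
positive semidefiniteness.
-/

open Matrix

section Scalar

variable {K : Type*} [Field K] [LinearOrder K] [IsStrictOrderedRing K] {a b e : K}

theorem mul_pos_of_mul_pos_of_mul_pos (ha : 0 < e * a) (hb : 0 < e * b) : 0 < a * b := by
  have h : 0 < e * e * (a * b) := by
    calc 0 < e * a * (e * b) := mul_pos ha hb
      _ = e * e * (a * b) := by ring
  exact pos_of_mul_pos_right h (mul_self_nonneg e)

theorem sub_mul_inv_sub_inv_eq_neg_sq_div (ha : a ≠ 0) (hb : b ≠ 0) :
    (a - b) * (a⁻¹ - b⁻¹) = -((a - b) ^ 2 / (a * b)) := by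
  rw [inv_sub_inv ha hb]
  ring

theorem sub_mul_inv_sub_inv_neg (hab : 0 < a * b) (hne : a ≠ b) :
    (a - b) * (a⁻¹ - b⁻¹) < 0 := by
  rw [sub_mul_inv_sub_inv_eq_neg_sq_div (left_ne_zero_of_mul hab.ne')
    (right_ne_zero_of_mul hab.ne'), neg_lt_zero]
  exact div_pos (sq_pos_of_ne_zero (sub_ne_zero.mpr hne)) hab

theorem sub_mul_inv_sub_inv_nonpos (hab : 0 < a * b) : (a - b) * (a⁻¹ - b⁻¹) ≤ 0 := by
  rcases eq_or_ne a b with rfl | hne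
  · simp
  · exact (sub_mul_inv_sub_inv_neg hab hne).le

end Scalar

theorem Matrix.PosSemidef.eq_of_mulVec_eq_inv {ι K : Type*} [Fintype ι] [Field K] [LinearOrder K]
    [IsStrictOrderedRing K] [StarRing K] [TrivialStar K] {H : Matrix ι ι K} (hH : H.PosSemidef)
    {w₁ w₂ : ι → K} (hpos : ∀ j, 0 < w₁ j * w₂ j)
    (hw₁ : ∀ j, (H *ᵥ w₁) j = (w₁ j)⁻¹) (hw₂ : ∀ j, (H *ᵥ w₂) j = (w₂ j)⁻¹) :
    w₁ = w₂ := by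
  by_contra hne
  obtain ⟨j, hj⟩ := Function.ne_iff.mp hne
  have hform : star (w₁ - w₂) ⬝ᵥ H *ᵥ (w₁ - w₂) =
      ∑ i, (w₁ i - w₂ i) * ((w₁ i)⁻¹ - (w₂ i)⁻¹) := by
    simp only [star_trivial, dotProduct, mulVec_sub, Pi.sub_apply, hw₁, hw₂]
  have hneg : ∑ i, (w₁ i - w₂ i) * ((w₁ i)⁻¹ - (w₂ i)⁻¹) < 0 :=
    Finset.sum_neg' (fun i _ ↦ sub_mul_inv_sub_inv_nonpos (hpos i))
      ⟨j, Finset.mem_univ j, sub_mul_inv_sub_inv_neg (hpos j) hj⟩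
  exact (hH.dotProduct_mulVec_nonneg _).not_gt (hform ▸ hneg)

theorem inverse_eigenvector_unique_in_quadrant_general (n : ℕ)
    (H : Matrix (Fin n) (Fin n) ℝ) (hH : H.PosSemidef)
    (ε : Fin n → ℝ)
    (w₁ w₂ : Fin n → ℝ)
    (hw₁Q : ∀ j, 0 < ε j * w₁ j) (hw₂Q : ∀ j, 0 < ε j * w₂ j)
    (hw₁ : ∀ j, H.mulVec w₁ j = (w₁ j)⁻¹)
    (hw₂ : ∀ j, H.mulVec w₂ j = (w₂ j)⁻¹) :
    w₁ = w₂ :=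
  hH.eq_of_mulVec_eq_inv (fun j ↦ mul_pos_of_mul_pos_of_mul_pos (hw₁Q j) (hw₂Q j)) hw₁ hw₂

theorem inverse_eigenvector_unique_in_quadrant (n : ℕ)
    (H : Matrix (Fin n) (Fin n) ℝ) (hH : H.PosSemidef)
    (ε : Fin n → ℝ) (hε : ∀ j, ε j = 1 ∨ ε j = -1)
    (w₁ w₂ : Fin n → ℝ)
    (hw₁Q : ∀ j, 0 < ε j * w₁ j) (hw₂Q : ∀ j, 0 < ε j * w₂ j)
    (hw₁ : ∀ j, H.mulVec w₁ j = (w₁ j)⁻¹)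
    (hw₂ : ∀ j, H.mulVec w₂ j = (w₂ j)⁻¹) :
    w₁ = w₂ :=
  inverse_eigenvector_unique_in_quadrant_general n H hH ε w₁ w₂ hw₁Q hw₂Q hw₁ hw₂
end

section
/- Let H be an n×n real symmetric positive semidefinite matrix and Q a closed quadrant of ℝⁿ. There exists an inverse eigenvector of H in the interior of Q if and only if Q ∩ Ker(H) = {0}. -/
/-!
If `H w = w⁻¹` and `x` lies in the closed quadrant of `w` with `H x = 0`, then
`∑ x_j / w_j = x ⬝ᵥ H w = H x ⬝ᵥ w = 0` is a sum of terms of one sign, so `x = 0`.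

Conversely, conjugating by `diagonal ε` turns the quadrant into the positive orthant, where
inverse eigenvectors are the critical points of `F u = (u ⬝ᵥ H u) / 2 - ∑ j, log u_j`.
The kernel condition and compactness of the standard simplex give
`u ⬝ᵥ H u ≥ δ (∑ j, u_j)²` on the orthant, so `F` tends to infinity both when `u` grows and
when a coordinate tends to `0`. Hence `F` attains its minimum inside a compact box in the open
orthant, and that minimiser is an inverse eigenvector.
-/

open Matrix

namespace Real

lemma neg_inv_le_mul_sq_sub_log {δ t : ℝ} (hδ : 0 < δ) (ht : 0 < t) :
    -δ⁻¹ ≤ δ * t ^ 2 - log t := by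
  have hamgm : t ≤ δ * t ^ 2 + δ⁻¹ := by
    have := two_mul_le_add_sq (δ * t) 1
    field_simp
    nlinarith
  linarith [log_le_sub_one_of_pos ht]

lemma exists_bounds_of_mul_sq_sub_log_le {δ : ℝ} (hδ : 0 < δ) (C : ℝ) :
    ∃ m R, 0 < m ∧ ∀ t, 0 < t → δ * t ^ 2 - log t ≤ C → m < t ∧ t < R := by
  refine ⟨exp (-C) / 2, (2 * C + 4 * δ⁻¹) * δ⁻¹ + 2, by positivity,
    fun t ht hle => ⟨?_, ?_⟩⟩
  · have : exp (-C) ≤ t := by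
      rw [← exp_log ht, exp_le_exp]
      nlinarith [sq_nonneg t]
    linarith [exp_pos (-C)]
  · have hhalf := neg_inv_le_mul_sq_sub_log (half_pos hδ) ht
    have : t ^ 2 ≤ (2 * C + 4 * δ⁻¹) * δ⁻¹ := by
      rw [le_mul_inv_iff₀ hδ]
      rw [inv_div, div_eq_mul_inv] at hhalf
      linarith
    nlinarith

end Real

namespace Matrix

variable {ι : Type*} [Fintype ι]

lemma IsSymm.dotProduct_mulVec_comm {H : Matrix ι ι ℝ} (hH : H.IsSymm) (u v : ι → ℝ) :
    u ⬝ᵥ H *ᵥ v = H *ᵥ u ⬝ᵥ v := by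
  rw [dotProduct_mulVec, ← mulVec_transpose, hH.eq]

lemma IsSymm.eq_zero_of_mulVec_eq_zero_of_mulVec_eq_inv {H : Matrix ι ι ℝ} (hH : H.IsSymm)
    {w x : ι → ℝ} (hw : ∀ j, w j ≠ 0) (hHw : H *ᵥ w = w⁻¹) (hxw : ∀ j, 0 ≤ x j * w j)
    (hHx : H *ᵥ x = 0) : x = 0 := by
  have hsum : ∑ j, x j * w j / w j ^ 2 = 0 :=
    calc ∑ j, x j * w j / w j ^ 2 = x ⬝ᵥ H *ᵥ w := by
          rw [hHw]
          exact Finset.sum_congr rfl fun j _ => by simp only [Pi.inv_apply]; field_simp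
      _ = 0 := by rw [hH.dotProduct_mulVec_comm, hHx, zero_dotProduct]
  have hterms := (Finset.sum_eq_zero_iff_of_nonneg fun j _ =>
    div_nonneg (hxw j) (sq_nonneg (w j))).mp hsum
  funext j
  simpa [hw j] using hterms j (Finset.mem_univ j)

lemma PosSemidef.dotProduct_mulVec_pos {H : Matrix ι ι ℝ} (hH : H.PosSemidef) {u : ι → ℝ}
    (hu : H *ᵥ u ≠ 0) : 0 < u ⬝ᵥ H *ᵥ u := by
  have hnonneg : 0 ≤ u ⬝ᵥ H *ᵥ u := by simpa using hH.dotProduct_mulVec_nonneg u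
  exact hnonneg.lt_of_ne fun h => hu ((hH.dotProduct_mulVec_zero_iff u).mp (by simpa using h.symm))

lemma exists_pos_mul_sq_sum_le_dotProduct_mulVec {H : Matrix ι ι ℝ}
    (hpos : ∀ u : ι → ℝ, 0 ≤ u → u ≠ 0 → 0 < u ⬝ᵥ H *ᵥ u) :
    ∃ δ > 0, ∀ u : ι → ℝ, 0 ≤ u → δ * (∑ j, u j) ^ 2 ≤ u ⬝ᵥ H *ᵥ u := by
  have hcont : Continuous fun u : ι → ℝ => u ⬝ᵥ H *ᵥ u := by fun_prop
  obtain ⟨δ, hδ, hmin⟩ := (isCompact_stdSimplex ℝ ι).exists_forall_le' hcont.continuousOn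
    fun u hu => hpos u hu.1 fun h => by simpa [h] using hu.2
  refine ⟨δ, hδ, fun u hu => ?_⟩
  obtain hs | hs := (Finset.sum_nonneg fun j _ => hu j : 0 ≤ ∑ j, u j).eq_or_lt
  · have : u = 0 := funext fun j =>
      (Finset.sum_eq_zero_iff_of_nonneg fun j _ => hu j).mp hs.symm j (Finset.mem_univ j)
    simp [this]
  · set s := ∑ j, u j
    have hunit : s⁻¹ • u ∈ stdSimplex ℝ ι :=
      ⟨fun j => mul_nonneg (inv_nonneg.mpr hs.le) (hu j), by
        simp only [Pi.smul_apply, smul_eq_mul, ← Finset.mul_sum]; exact inv_mul_cancel₀ hs.ne'⟩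
    have hscale : u ⬝ᵥ H *ᵥ u = s ^ 2 * ((s⁻¹ • u) ⬝ᵥ H *ᵥ (s⁻¹ • u)) := by
      simp only [mulVec_smul, dotProduct_smul, smul_dotProduct, smul_eq_mul]
      field_simp
    rw [hscale, mul_comm]
    exact mul_le_mul_of_nonneg_left (hmin _ hunit) (sq_nonneg s)

noncomputable def logBarrierPotential (H : Matrix ι ι ℝ) (u : ι → ℝ) : ℝ :=
  u ⬝ᵥ H *ᵥ u / 2 - ∑ j, Real.log (u j)

lemma continuousOn_logBarrierPotential (H : Matrix ι ι ℝ) :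
    ContinuousOn H.logBarrierPotential {u | ∀ j, u j ≠ 0} :=
  ((by fun_prop : Continuous fun u : ι → ℝ => u ⬝ᵥ H *ᵥ u).continuousOn.div_const 2).sub
    (continuousOn_finsetSum _ fun j _ => (continuous_apply j).continuousOn.log fun _ hu => hu j)

lemma exists_bounds_of_logBarrierPotential_le {H : Matrix ι ι ℝ} {δ : ℝ} (hδ : 0 < δ)
    (hH : ∀ u : ι → ℝ, 0 ≤ u → δ * (∑ j, u j) ^ 2 ≤ u ⬝ᵥ H *ᵥ u) (c : ℝ) :
    ∃ m R, 0 < m ∧ ∀ u : ι → ℝ, (∀ j, 0 < u j) → H.logBarrierPotential u ≤ c →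
      ∀ j, m < u j ∧ u j < R := by
  obtain ⟨m, R, hm, hbound⟩ := Real.exists_bounds_of_mul_sq_sub_log_le (half_pos hδ)
    (c + Fintype.card ι * (δ / 2)⁻¹)
  refine ⟨m, R, hm, fun u hu hle k => hbound (u k) (hu k) ?_⟩
  set g : ℝ → ℝ := fun t => δ / 2 * t ^ 2 - Real.log t
  have hsplit : ∑ j, (g (u j) + (δ / 2)⁻¹) ≤
      H.logBarrierPotential u + Fintype.card ι * (δ / 2)⁻¹ := by
    have := hH u fun j => (hu j).le
    have := Finset.sum_sq_le_sq_sum_of_nonneg (s := Finset.univ) fun j _ => (hu j).le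
    simp only [logBarrierPotential, g, Finset.sum_add_distrib, Finset.sum_sub_distrib,
      ← Finset.mul_sum, Finset.sum_const, Finset.card_univ, nsmul_eq_mul]
    nlinarith
  have hk := Finset.single_le_sum (f := fun j => g (u j) + (δ / 2)⁻¹)
    (fun j _ => neg_le_iff_add_nonneg.mp (Real.neg_inv_le_mul_sq_sub_log (half_pos hδ) (hu j)))
    (Finset.mem_univ k)
  have : 0 < (δ / 2)⁻¹ := by positivity
  simp only [g] at hk hsplit ⊢
  linarith

lemma IsSymm.hasDerivAt_logBarrierPotential {H : Matrix ι ι ℝ} (hH : H.IsSymm) {u : ι → ℝ}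
    (hu : ∀ j, u j ≠ 0) (v : ι → ℝ) :
    HasDerivAt (fun t : ℝ => H.logBarrierPotential (u + t • v)) (v ⬝ᵥ (H *ᵥ u - u⁻¹)) 0 := by
  have hline : (fun t : ℝ => H.logBarrierPotential (u + t • v)) = fun t =>
      u ⬝ᵥ H *ᵥ u / 2 + t * (v ⬝ᵥ H *ᵥ u) + t ^ 2 * (v ⬝ᵥ H *ᵥ v / 2) -
        ∑ j, Real.log (u j + t * v j) := by
    funext t
    simp only [logBarrierPotential, mulVec_add, mulVec_smul, add_dotProduct, dotProduct_add,
      smul_dotProduct, dotProduct_smul, smul_eq_mul, hH.dotProduct_mulVec_comm u v,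
      dotProduct_comm (H *ᵥ u) v, Pi.add_apply, Pi.smul_apply]
    ring
  have hquad : HasDerivAt (fun t : ℝ => u ⬝ᵥ H *ᵥ u / 2 + t * (v ⬝ᵥ H *ᵥ u) +
      t ^ 2 * (v ⬝ᵥ H *ᵥ v / 2)) (v ⬝ᵥ H *ᵥ u) 0 :=
    ((((hasDerivAt_id (0 : ℝ)).mul_const (v ⬝ᵥ H *ᵥ u)).const_add (u ⬝ᵥ H *ᵥ u / 2)).add
      ((hasDerivAt_pow 2 (0 : ℝ)).mul_const (v ⬝ᵥ H *ᵥ v / 2))).congr_deriv (by simp)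
  have hlog : HasDerivAt (fun t : ℝ => ∑ j, Real.log (u j + t * v j)) (v ⬝ᵥ u⁻¹) 0 :=
    (HasDerivAt.fun_sum (u := Finset.univ) fun j _ =>
      (((hasDerivAt_id (0 : ℝ)).mul_const (v j)).const_add (u j)).log (by simpa using hu j)
      ).congr_deriv (by simp [dotProduct, div_eq_mul_inv])
  rw [hline, dotProduct_sub]
  exact hquad.sub hlog

lemma IsSymm.mulVec_eq_inv_of_isLocalMin {H : Matrix ι ι ℝ} (hH : H.IsSymm) {u : ι → ℝ}
    (hu : ∀ j, u j ≠ 0) (hmin : IsLocalMin H.logBarrierPotential u) : H *ᵥ u = u⁻¹ := by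
  have hcrit (v : ι → ℝ) : v ⬝ᵥ (H *ᵥ u - u⁻¹) = 0 := by
    have hmin' : IsLocalMin H.logBarrierPotential (u + (0 : ℝ) • v) := by simpa using hmin
    exact (hmin'.comp_continuous (g := fun t : ℝ => u + t • v) (by fun_prop)).hasDerivAt_eq_zero
      (hH.hasDerivAt_logBarrierPotential hu v)
  exact sub_eq_zero.mp (dotProduct_self_eq_zero.mp (hcrit _))

theorem PosSemidef.exists_pos_mulVec_eq_inv {H : Matrix ι ι ℝ} (hH : H.PosSemidef)
    (hker : ∀ x : ι → ℝ, 0 ≤ x → H *ᵥ x = 0 → x = 0) :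
    ∃ u : ι → ℝ, (∀ j, 0 < u j) ∧ H *ᵥ u = u⁻¹ := by
  obtain ⟨δ, hδ, hcoercive⟩ := exists_pos_mul_sq_sum_le_dotProduct_mulVec fun u hu hu0 =>
    hH.dotProduct_mulVec_pos (mt (hker u hu) hu0)
  obtain ⟨m, R, hm, hbound⟩ :=
    exists_bounds_of_logBarrierPotential_le hδ hcoercive (H.logBarrierPotential 1)
  -- A minimiser over the box `[m, R]ⁿ` satisfies `F u ≤ F 1`, so it lies in the open box.
  have hbox : ∀ u ∈ Set.univ.pi fun _ : ι => Set.Icc m R, ∀ j, 0 < u j :=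
    fun u hu j => hm.trans_le (hu j trivial).1
  obtain ⟨u, hu, hmin⟩ := (isCompact_univ_pi fun _ => isCompact_Icc).exists_isLocalMin_mem_open
    (Set.pi_mono fun _ _ => Set.Ioo_subset_Icc_self)
    ((H.continuousOn_logBarrierPotential).mono fun u hu j => (hbox u hu j).ne')
    (z := 1) (fun j _ => Set.mem_Icc_of_Ioo (hbound 1 (fun _ => one_pos) le_rfl j))
    (fun u ⟨huK, huU⟩ => not_le.mp fun hle =>
      huU fun j _ => hbound u (hbox u huK) hle j)
    (isOpen_set_pi Set.finite_univ fun _ _ => isOpen_Ioo)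
  have hupos : ∀ j, 0 < u j := fun j => hm.trans (hu j trivial).1
  exact ⟨u, hupos, (isHermitian_iff_isSymm.mp hH.isHermitian).mulVec_eq_inv_of_isLocalMin
    (fun j => (hupos j).ne') hmin⟩

theorem PosSemidef.exists_mulVec_eq_inv_of_sign {H : Matrix ι ι ℝ} (hH : H.PosSemidef)
    {ε : ι → ℝ} (hε : ∀ j, ε j * ε j = 1)
    (hker : ∀ x : ι → ℝ, (∀ j, 0 ≤ ε j * x j) → H *ᵥ x = 0 → x = 0) :
    ∃ w : ι → ℝ, (∀ j, 0 < ε j * w j) ∧ H *ᵥ w = w⁻¹ := by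
  classical
  have hεε (x : ι → ℝ) : ε * (ε * x) = x := funext fun j => by simp [← mul_assoc, hε]
  have hD (x : ι → ℝ) : diagonal ε *ᵥ x = ε * x := funext (mulVec_diagonal ε x)
  have hH' : (diagonal ε * H * diagonal ε).PosSemidef := by
    simpa using hH.conjTranspose_mul_mul_same (diagonal ε)
  have hmul (x : ι → ℝ) : (diagonal ε * H * diagonal ε) *ᵥ x = ε * H *ᵥ (ε * x) := by
    rw [← mulVec_mulVec, ← mulVec_mulVec, hD, hD]
  obtain ⟨u, hu, hHu⟩ := hH'.exists_pos_mulVec_eq_inv fun x hx hx0 => by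
    rw [hmul] at hx0
    have : ε * x = 0 := hker _ (fun j => by simpa [← mul_assoc, hε] using hx j) (by
      rw [← hεε (H *ᵥ (ε * x)), hx0, mul_zero])
    rw [← hεε x, this, mul_zero]
  refine ⟨ε * u, fun j => by simpa [← mul_assoc, hε] using hu j, ?_⟩
  have hεinv : ε⁻¹ = ε := inv_eq_of_mul_eq_one_right (funext hε)
  rw [← hεε (H *ᵥ (ε * u)), ← hmul, hHu, mul_inv, hεinv]

end Matrix

theorem inverse_eigenvector_exists_iff (n : ℕ)
    (H : Matrix (Fin n) (Fin n) ℝ) (hH : H.PosSemidef)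
    (ε : Fin n → ℝ) (hε : ∀ j, ε j = 1 ∨ ε j = -1) :
    (∃ w : Fin n → ℝ, (∀ j, 0 < ε j * w j) ∧ ∀ j, H.mulVec w j = (w j)⁻¹) ↔
      (∀ x : Fin n → ℝ, (∀ j, 0 ≤ ε j * x j) → H.mulVec x = 0 → x = 0) := by
  have hεε : ∀ j, ε j * ε j = 1 := fun j => by rcases hε j with h | h <;> simp [h]
  refine ⟨fun ⟨w, hw, hHw⟩ x hx hHx => ?_, fun hker => ?_⟩
  · refine (isHermitian_iff_isSymm.mp hH.isHermitian).eq_zero_of_mulVec_eq_zero_of_mulVec_eq_inv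
      (fun j h => by simpa [h] using hw j) (funext hHw) (fun j => ?_) hHx
    calc 0 ≤ (ε j * x j) * (ε j * w j) := mul_nonneg (hx j) (hw j).le
      _ = x j * w j := by linear_combination (x j * w j) * hεε j
  · obtain ⟨w, hw, hHw⟩ := hH.exists_mulVec_eq_inv_of_sign hεε hker
    exact ⟨w, hw, congrFun hHw⟩
end

section
/- Let H be an n×n real positive definite matrix with all diagonal entries equal to 1, and suppose w ∈ ℝⁿ is a local extremum of the function w ↦ ∏_{k=1}^n |w_k| restricted to the set {w : wᵀHw = n} with all coordinates of w nonzero. Then w is an inverse eigenvector of H, i.e., (Hw)_j = 1/w_j for all j. -/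
/-!
Near `w` every coordinate is nonzero, so `w` is also a constrained extremum of
`∑ₖ log xₖ = log ∏ₖ |xₖ|`, whose gradient is `w⁻¹`. For symmetric `H` the gradient of
`x ⬝ᵥ H x` is `2 H w`, so Lagrange multipliers give `H w = c • w⁻¹`, and pairing with `w`
in the constraint `w ⬝ᵥ H w = n` forces `c = 1`.
-/

open Matrix

theorem IsLocalExtrOn.log {α : Type*} [TopologicalSpace α] {f : α → ℝ} {s : Set α} {a : α}
    (hf : IsLocalExtrOn f s a) (hpos : ∀ᶠ x in nhds a, 0 < f x) :
    IsLocalExtrOn (fun x => Real.log (f x)) s a := by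
  rcases hf with hmin | hmax
  · exact Or.inl <| hmin.mono fun x hx => Real.log_le_log hpos.self_of_nhds hx
  · exact Or.inr <| (hmax.and (hpos.filter_mono nhdsWithin_le_nhds)).mono fun x hx =>
      Real.log_le_log hx.2 hx.1

section

variable {ι : Type*} [Fintype ι]

noncomputable def dotProductCLM (p : ι → ℝ) : (ι → ℝ) →L[ℝ] ℝ :=
  LinearMap.toContinuousLinearMap (dotProductBilin ℝ ℝ p)

@[simp]
theorem dotProductCLM_apply (p v : ι → ℝ) : dotProductCLM p v = p ⬝ᵥ v := rfl

theorem hasStrictFDerivAt_sum_log {w : ι → ℝ} (hw : ∀ k, w k ≠ 0) :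
    HasStrictFDerivAt (fun x : ι → ℝ => ∑ k, Real.log (x k)) (dotProductCLM w⁻¹) w := by
  refine (HasStrictFDerivAt.fun_sum (u := Finset.univ)
    (A := fun k (x : ι → ℝ) => Real.log (x k))
    fun k _ => (hasStrictFDerivAt_apply k w).log (hw k)).congr_fderiv ?_
  ext v
  simp [dotProduct, mul_comm]

theorem hasStrictFDerivAt_dotProduct_mulVec_self (H : Matrix ι ι ℝ) (w : ι → ℝ) :
    HasStrictFDerivAt (fun x => x ⬝ᵥ H *ᵥ x) (dotProductCLM ((H + Hᵀ) *ᵥ w)) w := by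
  have hrow : ∀ i, HasStrictFDerivAt (fun x : ι → ℝ => (H *ᵥ x) i) (dotProductCLM (H i)) w :=
    fun i => (dotProductCLM (H i)).hasStrictFDerivAt
  refine (HasStrictFDerivAt.fun_sum (u := Finset.univ)
    (A := fun i (x : ι → ℝ) => x i * (H *ᵥ x) i)
    fun i _ => (hasStrictFDerivAt_apply i w).mul (hrow i)).congr_fderiv ?_
  ext v
  simp only [_root_.sum_apply, _root_.add_apply, _root_.smul_apply, dotProductCLM_apply,
    ContinuousLinearMap.proj_apply, smul_eq_mul]
  rw [Finset.sum_add_distrib, add_mulVec, add_dotProduct, mulVec_transpose, ← dotProduct_mulVec,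
    add_comm]
  rfl

theorem IsLocalExtrOn.sum_log_of_prod_abs {s : Set (ι → ℝ)} {w : ι → ℝ} (hw : ∀ k, w k ≠ 0)
    (hext : IsLocalExtrOn (fun x => ∏ k, |x k|) s w) :
    IsLocalExtrOn (fun x => ∑ k, Real.log (x k)) s w := by
  have hne : ∀ᶠ x in nhds w, ∀ k, x k ≠ 0 :=
    Filter.eventually_all.2 fun k => (continuous_apply k).continuousAt.eventually_ne (hw k)
  have hlog : ∀ x : ι → ℝ, (∀ k, x k ≠ 0) → Real.log (∏ k, |x k|) = ∑ k, Real.log (x k) :=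
    fun x hx => by
      simp only [Real.log_prod fun k _ => abs_ne_zero.2 (hx k), Real.log_abs]
  exact IsExtrFilter.congr
    (hext.log (hne.mono fun x hx => Finset.prod_pos fun k _ => abs_pos.2 (hx k)))
    ((hne.filter_mono nhdsWithin_le_nhds).mono hlog) (hlog w hw)

theorem IsLocalExtrOn.exists_eq_smul_inv_of_sum_log {Q : (ι → ℝ) → ℝ} {q w : ι → ℝ}
    (hw : ∀ k, w k ≠ 0) (hQ : HasStrictFDerivAt Q (dotProductCLM q) w)
    (hext : IsLocalExtrOn (fun x => ∑ k, Real.log (x k)) {x | Q x = Q w} w) :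
    ∃ c : ℝ, q = c • w⁻¹ := by
  classical
  rcases isEmpty_or_nonempty ι with hι | ⟨⟨i₀⟩⟩
  · exact ⟨0, Subsingleton.elim _ _⟩
  obtain ⟨a, b, hab, hcomb⟩ :=
    hext.exists_multipliers_of_hasStrictFDerivAt_1d hQ (hasStrictFDerivAt_sum_log hw)
  have hcoord : ∀ i, a * q i + b * (w i)⁻¹ = 0 := fun i => by
    simpa [dotProduct_single_one] using congrArg (· (Pi.single i 1)) hcomb
  -- `w⁻¹` has no zero coordinate, so the constraint's multiplier is nonzero
  have ha : a ≠ 0 := by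
    rintro rfl
    have hb : b = 0 := by simpa [hw i₀] using hcoord i₀
    exact hab (by simp [hb])
  refine ⟨-b / a, funext fun i => ?_⟩
  simp only [Pi.smul_apply, Pi.inv_apply, smul_eq_mul]
  field_simp
  linear_combination hcoord i

theorem eq_inv_of_eq_smul_inv {v w : ι → ℝ} {c : ℝ} (hw : ∀ k, w k ≠ 0) (hv : v = c • w⁻¹)
    (hdot : w ⬝ᵥ v = Fintype.card ι) : v = w⁻¹ := by
  rcases isEmpty_or_nonempty ι with hι | hι
  · exact Subsingleton.elim _ _
  have hww : w ⬝ᵥ w⁻¹ = Fintype.card ι := by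
    simp [dotProduct, mul_inv_cancel₀ (hw _)]
  have hc : c = 1 := by
    rw [hv, dotProduct_smul, hww, smul_eq_mul] at hdot
    exact (mul_eq_right₀ (by positivity)).1 hdot
  rw [hv, hc, one_smul]

end

theorem local_extremum_is_inverse_eigenvector_general (n : ℕ)
    (H : Matrix (Fin n) (Fin n) ℝ) (hH : H.PosDef)
    (w : Fin n → ℝ) (hw : ∀ j, w j ≠ 0)
    (hconstraint : w ⬝ᵥ H.mulVec w = n)
    (hext : IsLocalExtrOn (fun x : Fin n → ℝ => ∏ k, |x k|)
      {x : Fin n → ℝ | x ⬝ᵥ H.mulVec x = n} w) :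
    ∀ j, H.mulVec w j = (w j)⁻¹ := by
  have hsymm : Hᵀ = H := by
    simpa [conjTranspose_eq_transpose_of_trivial] using hH.isHermitian.eq
  rw [← hconstraint] at hext
  obtain ⟨c, hc⟩ := (hext.sum_log_of_prod_abs hw).exists_eq_smul_inv_of_sum_log hw
    (hasStrictFDerivAt_dotProduct_mulVec_self H w)
  have hHw : H *ᵥ w = (c / 2) • w⁻¹ := by
    rw [hsymm, add_mulVec] at hc
    funext i
    have hci := congrFun hc i
    simp only [Pi.add_apply, Pi.smul_apply, smul_eq_mul] at hci ⊢
    linarith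
  exact congrFun (eq_inv_of_eq_smul_inv hw hHw (by simpa using hconstraint))

theorem local_extremum_is_inverse_eigenvector (n : ℕ)
    (H : Matrix (Fin n) (Fin n) ℝ) (hH : H.PosDef) (hdiag : ∀ i, H i i = 1)
    (w : Fin n → ℝ) (hw : ∀ j, w j ≠ 0)
    (hconstraint : w ⬝ᵥ H.mulVec w = n)
    (hext : IsLocalExtrOn (fun x : Fin n → ℝ => ∏ k, |x k|)
      {x : Fin n → ℝ | x ⬝ᵥ H.mulVec x = n} w) :
    ∀ j, H.mulVec w j = (w j)⁻¹ :=
  local_extremum_is_inverse_eigenvector_general n H hH w hw hconstraint hext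
end

section
/- Let v_1,...,v_n (n ≥ 2) be unit vectors in a real inner product space H. Then there exists a unit vector v ∈ H with |⟨v_k, v⟩| ≥ 1/√(1+(n−1)²) for all k. -/
/-!
Choose signs `ε k = ±1` maximising `‖s‖` for `s = ∑ ε k • v k`, and put `w k = ε k • v k`.
Flipping one sign cannot increase `‖s‖`, i.e. `‖s - 2 • w j‖ ≤ ‖s‖`, which says `a j := ⟪w j, s⟫ ≥ 1`.
The other `n - 1` vectors give `‖s - w j‖ ≤ n - 1`, so with `C = 1 + (n - 1)²`
`‖s‖² = ‖s - w j‖² + 2 a j - 1 ≤ C + 2 a j - 2 ≤ a j² C`, the last step being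
`(a j - 1) ((a j + 1) C - 2) ≥ 0`. Hence `u = s / ‖s‖` satisfies `|⟪v j, u⟫| = a j / ‖s‖ ≥ 1 / √C`.
-/

open Real

lemma norm_sum_sub_le_card_sub_one {E ι : Type*} [SeminormedAddCommGroup E] [Fintype ι]
    {w : ι → E} (hw : ∀ k, ‖w k‖ = 1) (j : ι) : ‖∑ k, w k - w j‖ ≤ Fintype.card ι - 1 := by
  classical
  rw [← Finset.sum_erase_eq_sub (Finset.mem_univ j)]
  calc ‖∑ k ∈ Finset.univ.erase j, w k‖ ≤ ∑ k ∈ Finset.univ.erase j, ‖w k‖ := norm_sum_le _ _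
    _ = Fintype.card ι - 1 := by
      have : Nonempty ι := ⟨j⟩
      simp [hw, Finset.card_erase_of_mem, Nat.cast_pred Fintype.card_pos]

lemma exists_signs_norm_sum_flip_le {E ι : Type*} [SeminormedAddCommGroup E] [Module ℝ E]
    [Fintype ι] (v : ι → E) :
    ∃ ε : ι → ℤˣ, ∀ j, ‖∑ k, ε k • v k - (2 : ℝ) • (ε j • v j)‖ ≤ ‖∑ k, ε k • v k‖ := by
  classical
  obtain ⟨ε, hε⟩ := Finite.exists_max fun ε : ι → ℤˣ => ‖∑ k, ε k • v k‖
  refine ⟨ε, fun j => ?_⟩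
  have hflip : ∑ k, Function.update ε j (-ε j) k • v k
      = ∑ k, ε k • v k - (2 : ℝ) • (ε j • v j) := by
    rw [Finset.sum_congr rfl fun k _ =>
        Function.apply_update (fun k (u : ℤˣ) => u • v k) ε j (-ε j) k,
      Finset.sum_update_of_mem (Finset.mem_univ j), ← Finset.erase_eq,
      Finset.sum_erase_eq_sub (Finset.mem_univ j), Units.neg_smul, two_smul]
    abel
  exact hflip ▸ hε (Function.update ε j (-ε j))

section InnerProductSpace

variable {E : Type*} [NormedAddCommGroup E] [InnerProductSpace ℝ E]

lemma norm_sq_le_inner_of_norm_sub_two_smul_le {s w : E} (h : ‖s - (2 : ℝ) • w‖ ≤ ‖s‖) :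
    ‖w‖ ^ 2 ≤ inner ℝ w s := by
  have hsq : ‖s - (2 : ℝ) • w‖ ^ 2 ≤ ‖s‖ ^ 2 := pow_le_pow_left₀ (norm_nonneg _) h 2
  rw [norm_sub_sq_real, real_inner_smul_right, norm_smul, real_inner_comm] at hsq
  norm_num at hsq
  nlinarith

lemma norm_le_inner_mul_sqrt {s w : E} {m : ℝ} (hw : ‖w‖ = 1) (hws : 1 ≤ inner ℝ w s)
    (hsw : ‖s - w‖ ≤ m) : ‖s‖ ≤ inner ℝ w s * √(1 + m ^ 2) := by
  set a := inner ℝ w s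
  have hsq : ‖s‖ ^ 2 ≤ m ^ 2 + 2 * a - 1 := by
    have := norm_sub_sq_real s w
    rw [hw, real_inner_comm] at this
    nlinarith [norm_nonneg (s - w)]
  have hfac : 0 ≤ (a - 1) * ((a + 1) * (1 + m ^ 2) - 2) := by
    apply mul_nonneg <;> nlinarith
  rw [← Real.sqrt_sq (by linarith : 0 ≤ a), ← Real.sqrt_mul (sq_nonneg a)]
  exact Real.le_sqrt_of_sq_le (by nlinarith)

lemma abs_inner_units_smul_left (u : ℤˣ) (x y : E) : |inner ℝ (u • x) y| = |inner ℝ x y| := by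
  rcases Int.units_eq_one_or u with rfl | rfl <;> simp [inner_neg_left]

end InnerProductSpace

theorem improved_plank {H : Type*} [NormedAddCommGroup H] [InnerProductSpace ℝ H]
    (n : ℕ) (hn : 2 ≤ n) (v : Fin n → H) (hv : ∀ k, ‖v k‖ = 1) :
    ∃ u : H, ‖u‖ = 1 ∧
      ∀ k, |(inner ℝ (v k) u : ℝ)| ≥ 1 / Real.sqrt (1 + ((n : ℝ) - 1) ^ 2) := by
  obtain ⟨ε, hε⟩ := exists_signs_norm_sum_flip_le v
  set w := fun k => ε k • v k
  set s := ∑ k, w k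
  have hw : ∀ k, ‖w k‖ = 1 := fun k => by
    rcases Int.units_eq_one_or (ε k) with h | h <;> simp [w, h, hv]
  have hws : ∀ k, 1 ≤ inner ℝ (w k) s := fun k =>
    calc 1 = ‖w k‖ ^ 2 := by rw [hw k, one_pow]
      _ ≤ inner ℝ (w k) s := norm_sq_le_inner_of_norm_sub_two_smul_le (hε k)
  have hs : ∀ k, ‖s‖ ≤ inner ℝ (w k) s * √(1 + ((n : ℝ) - 1) ^ 2) := fun k => by
    simpa using norm_le_inner_mul_sqrt (hw k) (hws k) (norm_sum_sub_le_card_sub_one hw k)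
  have hs_pos : 0 < ‖s‖ := by
    let k₀ : Fin n := ⟨0, by omega⟩
    nlinarith [real_inner_le_norm (w k₀) s, hws k₀, hw k₀]
  refine ⟨‖s‖⁻¹ • s, by simp [norm_smul, hs_pos.ne'], fun k => ?_⟩
  rw [real_inner_smul_right, abs_mul, ← abs_inner_units_smul_left (ε k),
    abs_of_pos (inv_pos.2 hs_pos), abs_of_nonneg (zero_le_one.trans (hws k)), ge_iff_le,
    inv_mul_eq_div, le_div_iff₀ hs_pos, div_mul_eq_mul_div, one_mul, div_le_iff₀ (by positivity)]
  exact hs k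
end

section
/- Let M be an n×n real symmetric positive definite matrix with M𝟏 = 𝟏 such that every b ∈ ℝⁿ with bᵀMb = n satisfies ∏_{j=1}^n |(Mb)_j| ≤ 1. Then for every v ∈ ℝⁿ with vᵀMv = n and ⟨v, 𝟏⟩ = 0, one has ‖Mv‖₂² ≤ n(n−1). -/
/-!
Put `c = M v`. As `M` is symmetric with `M 𝟏 = 𝟏`, `∑ c_j = ∑ v_j = 0`, and for every `θ` the vector
`b = cos θ • 𝟏 + sin θ • v` has `bᵀ M b = n` and `M b = cos θ • 𝟏 + sin θ • c`. So the trigonometric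
polynomial `T θ = ∏ j, (cos θ + c_j sin θ)` of degree `n` satisfies `|T| ≤ 1` and `T 0 = 1`, and
Bernstein's inequality at a maximum gives `-T''(0) ≤ n²`, where `-T''(0) = n + ∑ c_j² - (∑ c_j)²`.

Both sides are computed from the expansion `T θ = ∑_s w_s e^{i m_s θ}` over sign vectors
`s ∈ {±1}ⁿ`, in which `-T''(0) = ∑_s w_s m_s²` is the second moment of a sum of independent
signs. Bernstein's inequality comes from M. Riesz's quadrature
`∑_{k=1}^{2n-1} ν_k (1 - e^{i m k π / n}) = m²` for `|m| ≤ n`, with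
`ν_k = (-1)^{k+1} / (1 - cos (k π / n))`: the terms `ν_k (T (k π / n) - (-1)^k)` are nonnegative,
hence `-T''(0) = ∑ ν_k (1 - T (k π / n)) ≤ ∑ ν_k (1 - (-1)^k) = n²`.
-/

open Finset Complex
open scoped Real

section IndependentProduct

variable {ι κ R : Type*} [Fintype ι] [DecidableEq ι] [Fintype κ] [CommRing R]

lemma sum_prod_mul_prod (p h : ι → κ → R) :
    ∑ s : ι → κ, (∏ j, p j (s j)) * ∏ j, h j (s j) = ∏ j, ∑ b, p j b * h j b := by
  rw [Fintype.prod_sum]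
  simp_rw [prod_mul_distrib]

variable {p : ι → κ → R} (X : ι → κ → R)

-- Both cases factor through `sum_prod_mul_prod`, with `h` trivial away from `j` and `j'`.
lemma sum_prod_mul_mul (hp : ∀ j, ∑ b, p j b = 1) (j j' : ι) :
    ∑ s : ι → κ, (∏ l, p l (s l)) * (X j (s j) * X j' (s j'))
      = if j = j' then ∑ b, p j b * X j b ^ 2
        else (∑ b, p j b * X j b) * ∑ b, p j' b * X j' b := by
  split_ifs with hjj'
  · subst hjj'
    have h := sum_prod_mul_prod p fun l b => if l = j then X j b ^ 2 else 1
    simp only [Fintype.prod_ite_eq', mul_ite, mul_one] at h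
    rw [prod_eq_single j (fun l _ hl => by simp [hl, hp]) (by simp)] at h
    simpa [sq] using h
  · have hoff : ∀ {f : ι → R}, (∀ l, l ≠ j → l ≠ j' → f l = 1) → ∏ l, f l = f j * f j' :=
      fun hf => prod_eq_mul j j' hjj' (fun l _ hl => hf l hl.1 hl.2) (by simp) (by simp)
    have h := sum_prod_mul_prod p fun l b => if l = j then X j b else if l = j' then X j' b else 1
    rw [hoff fun l hl hl' => by simp [hl, hl', hp]] at h
    simp only [ite_true, if_neg (Ne.symm hjj')] at h
    rw [← h]
    refine sum_congr rfl fun s _ => ?_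
    congr 1
    rw [hoff fun l hl hl' => by simp [hl, hl']]
    simp [Ne.symm hjj']

lemma sum_prod_mul_sum_sq (hp : ∀ j, ∑ b, p j b = 1) :
    ∑ s : ι → κ, (∏ j, p j (s j)) * (∑ j, X j (s j)) ^ 2
      = (∑ j, ∑ b, p j b * X j b) ^ 2
        + ∑ j, (∑ b, p j b * X j b ^ 2 - (∑ b, p j b * X j b) ^ 2) := by
  set μ : ι → R := fun j => ∑ b, p j b * X j b
  set ν : ι → R := fun j => ∑ b, p j b * X j b ^ 2
  have hsplit : ∀ j j', (if j = j' then ν j else μ j * μ j')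
      = μ j * μ j' + if j = j' then ν j - μ j ^ 2 else 0 := by
    intro j j'
    split_ifs with h
    · subst h; ring
    · ring
  calc ∑ s : ι → κ, (∏ j, p j (s j)) * (∑ j, X j (s j)) ^ 2
      = ∑ j, ∑ j', ∑ s : ι → κ, (∏ l, p l (s l)) * (X j (s j) * X j' (s j')) := by
        simp_rw [sq, sum_mul_sum, mul_sum]
        rw [sum_comm]
        exact sum_congr rfl fun j _ => sum_comm
    _ = (∑ j, μ j) ^ 2 + ∑ j, (ν j - μ j ^ 2) := by
        simp_rw [sum_prod_mul_mul X hp]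
        change ∑ j, ∑ j', (if j = j' then ν j else μ j * μ j') = _
        simp_rw [hsplit, sum_add_distrib, sum_ite_eq, mem_univ, if_true, sq, sum_mul_sum]

end IndependentProduct

lemma sum_units_int {M : Type*} [AddCommMonoid M] (f : ℤˣ → M) : ∑ u, f u = f 1 + f (-1) := by
  rw [UnitsInt.univ, sum_pair (by decide)]

noncomputable def cosAddMulSinCoeff (c : ℝ) (u : ℤˣ) : ℂ := (1 - (u : ℤ) * c * I) / 2

namespace cosAddMulSinCoeff

lemma sum_eq_one (c : ℝ) : ∑ u, cosAddMulSinCoeff c u = 1 := by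
  rw [sum_units_int]; simp [cosAddMulSinCoeff]; ring

lemma sum_mul_eq (c : ℝ) : ∑ u, cosAddMulSinCoeff c u * (u : ℤ) = -(c * I) := by
  rw [sum_units_int]; simp [cosAddMulSinCoeff]; ring

lemma sum_mul_sq_eq_one (c : ℝ) : ∑ u, cosAddMulSinCoeff c u * ((u : ℤ) : ℂ) ^ 2 = 1 := by
  rw [sum_units_int]; simp [cosAddMulSinCoeff]; ring

lemma sum_mul_exp (c θ : ℝ) :
    ∑ u, cosAddMulSinCoeff c u * cexp ((u : ℤ) * θ * I)
      = ((Real.cos θ + c * Real.sin θ : ℝ) : ℂ) := by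
  rw [sum_units_int]
  simp only [cosAddMulSinCoeff, Units.val_one, Units.val_neg, Int.cast_one, Int.cast_neg,
    one_mul, neg_one_mul, ofReal_add, ofReal_mul, ofReal_cos, ofReal_sin, Complex.cos, Complex.sin]
  field_simp
  ring_nf

end cosAddMulSinCoeff

section Expansion

open cosAddMulSinCoeff

variable {ι : Type*} [Fintype ι] [DecidableEq ι]

lemma prod_cos_add_mul_sin_eq_sum (c : ι → ℝ) (θ : ℝ) :
    ((∏ j, (Real.cos θ + c j * Real.sin θ) : ℝ) : ℂ)
      = ∑ s : ι → ℤˣ, (∏ j, cosAddMulSinCoeff (c j) (s j))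
          * cexp ((∑ j, (s j : ℤ) : ℤ) * θ * I) := by
  rw [ofReal_prod]
  simp_rw [← sum_mul_exp, Fintype.prod_sum, prod_mul_distrib, ← exp_sum]
  push_cast
  simp_rw [sum_mul]

lemma sum_prod_cosAddMulSinCoeff_mul_sq (c : ι → ℝ) :
    ∑ s : ι → ℤˣ, (∏ j, cosAddMulSinCoeff (c j) (s j)) * ((∑ j, (s j : ℤ) : ℤ) : ℂ) ^ 2
      = ((Fintype.card ι + ∑ j, c j ^ 2 - (∑ j, c j) ^ 2 : ℝ) : ℂ) := by
  push_cast
  rw [sum_prod_mul_sum_sq (fun _ (u : ℤˣ) => ((u : ℤ) : ℂ)) fun j => sum_eq_one (c j)]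
  simp only [sum_mul_eq, sum_mul_sq_eq_one, sum_neg_distrib, ← sum_mul, neg_sq, mul_pow, I_sq,
    sum_sub_distrib, sum_const, card_univ, nsmul_eq_mul, mul_one]
  ring

end Expansion

lemma pow_add_mul_two_sub_div_two_sub {z : ℂ} (hz0 : z ≠ 0) (hz1 : z ≠ 1) (a m : ℕ) :
    z ^ (a + m) * (2 - z ^ m - (z ^ m)⁻¹) / (2 - z - z⁻¹)
      = z ^ (a + 1) * (∑ j ∈ range m, z ^ j) ^ 2 := by
  have hgeom : (∑ j ∈ range m, z ^ j) * (z - 1) = z ^ m - 1 := geom_sum_mul z m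
  have hz1' : z - 1 ≠ 0 := sub_ne_zero.mpr hz1
  have hden : 2 - z - z⁻¹ = -(z - 1) ^ 2 / z := by field_simp; ring
  have hnum : 2 - z ^ m - (z ^ m)⁻¹ = -(z ^ m - 1) ^ 2 / z ^ m := by field_simp; ring
  rw [hden, hnum, ← hgeom]
  field_simp
  ring

lemma one_sub_cos_nat_mul_eq (x : ℝ) (p : ℕ) :
    1 - (Real.cos (p * x) : ℂ) = (2 - cexp (x * I) ^ p - (cexp (x * I) ^ p)⁻¹) / 2 := by
  rw [← exp_nat_mul, ← exp_neg, ofReal_cos]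
  have := two_cos (p * x : ℝ)
  push_cast at this ⊢
  ring_nf at this ⊢
  linear_combination -this / 2

lemma isPrimitiveRoot_exp_pi_div {n : ℕ} (hn : n ≠ 0) :
    IsPrimitiveRoot (cexp (π * I / n)) (2 * n) := by
  convert isPrimitiveRoot_exp (2 * n) (by omega) using 2
  push_cast
  field_simp

lemma sum_Ico_pow_eq_neg_one {ζ : ℂ} {N : ℕ} (hζ : IsPrimitiveRoot ζ N) {e : ℕ} (he0 : e ≠ 0)
    (he : e < N) : ∑ k ∈ Ico 1 N, (ζ ^ e) ^ k = -1 := by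
  have hne : ζ ^ e ≠ 1 := hζ.pow_ne_one_of_pos_of_lt he0 he
  have hroot : (ζ ^ e) ^ N = 1 := by rw [pow_right_comm, hζ.pow_eq_one, one_pow]
  have hfull : ∑ k ∈ range N, (ζ ^ e) ^ k = 0 := by rw [geom_sum_eq hne, hroot, sub_self, zero_div]
  rw [range_eq_Ico, sum_eq_sum_Ico_succ_bot (by omega), pow_zero] at hfull
  linear_combination hfull

-- Only `k ∈ [1, 2n)` is used: at `k = 0` the denominator vanishes.
noncomputable def rieszWeight (n k : ℕ) : ℝ := (-1) ^ (k + 1) / (1 - Real.cos (k * π / n))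

namespace rieszWeight

variable {n k : ℕ}

lemma one_sub_cos_pos (hk : k ∈ Ico 1 (2 * n)) : 0 < 1 - Real.cos (k * π / n) := by
  rw [mem_Ico] at hk
  have hn : (0 : ℝ) < n := by norm_cast; omega
  have hx : 0 < k * π / n := by
    have : (0 : ℝ) < k := by norm_cast; omega
    positivity
  have hx' : k * π / n < 2 * π := by
    rw [div_lt_iff₀ hn]
    have : (k : ℝ) < 2 * n := by exact_mod_cast hk.2
    nlinarith [Real.pi_pos]
  have := (Real.cos_eq_one_iff_of_lt_of_lt (by linarith) hx').not.mpr hx.ne'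
  linarith [(Real.cos_le_one _).lt_of_ne this]

lemma mul_sub_neg_one_pow_nonneg (hk : k ∈ Ico 1 (2 * n)) {t : ℝ} (ht : |t| ≤ 1) :
    0 ≤ rieszWeight n k * (t - (-1) ^ k) := by
  have hsq : ((-1 : ℝ) ^ k) ^ 2 = 1 := by rw [← pow_mul, mul_comm, pow_mul]; norm_num
  have hsign : (-1 : ℝ) ^ (k + 1) * (t - (-1) ^ k) = 1 + (-1) ^ (k + 1) * t := by
    rw [pow_succ]; linear_combination hsq
  rw [rieszWeight, div_mul_eq_mul_div, hsign]
  refine div_nonneg ?_ (one_sub_cos_pos hk).le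
  have : |(-1 : ℝ) ^ (k + 1) * t| ≤ 1 := by simpa using ht
  linarith [neg_abs_le ((-1 : ℝ) ^ (k + 1) * t)]

lemma two_mul_sub_mul_pi_div (hk : k ∈ Ico 1 (2 * n)) :
    ((2 * n - k : ℕ) : ℝ) * π / n = 2 * π - k * π / n := by
  rw [mem_Ico] at hk
  have hn : (n : ℝ) ≠ 0 := by norm_cast; omega
  rw [Nat.cast_sub hk.2.le]
  field_simp
  push_cast
  ring

lemma two_mul_sub (hk : k ∈ Ico 1 (2 * n)) : rieszWeight n (2 * n - k) = rieszWeight n k := by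
  have hpar : (-1 : ℝ) ^ (2 * n - k + 1) = (-1) ^ (k + 1) := by
    rw [mem_Ico] at hk
    rw [neg_one_pow_eq_pow_mod_two, neg_one_pow_eq_pow_mod_two (n := k + 1)]
    congr 1
    omega
  rw [rieszWeight, rieszWeight, hpar, two_mul_sub_mul_pi_div hk, Real.cos_two_pi_sub]

lemma sum_mul_sin (m : ℤ) :
    ∑ k ∈ Ico 1 (2 * n), rieszWeight n k * Real.sin (m * (k * π / n)) = 0 := by
  set f : ℕ → ℝ := fun k => rieszWeight n k * Real.sin (m * (k * π / n))
  have hodd : ∀ k ∈ Ico 1 (2 * n), f (2 * n - k) = -f k := by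
    intro k hk
    have := Real.sin_int_mul_two_pi_sub (m * (k * π / n)) m
    simp only [f, two_mul_sub hk, two_mul_sub_mul_pi_div hk]
    rw [mul_sub, this, mul_neg]
  have hreflect : ∑ k ∈ Ico 1 (2 * n), f (2 * n - k) = ∑ k ∈ Ico 1 (2 * n), f k := by
    rw [sum_Ico_reflect f 1 le_self_add, Nat.add_sub_cancel_left, Nat.add_sub_cancel]
  rw [sum_congr rfl hodd, sum_neg_distrib] at hreflect
  linarith

-- With `z = e^{i k π / n}`: `(1 - cos m x) / (1 - cos x) = z^{1-m} (1 + z + ⋯ + z^{m-1})²` and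
-- `(-1)^{k+1} = -z^n`.
lemma mul_one_sub_cos_eq (hk : k ∈ Ico 1 (2 * n)) {m : ℕ} (hm : m ≤ n) :
    (rieszWeight n k : ℂ) * (1 - Real.cos (m * (k * π / n)))
      = -∑ j ∈ range m, ∑ l ∈ range m, (cexp (π * I / n) ^ (n - m + 1 + j + l)) ^ k := by
  have hn : n ≠ 0 := by rw [mem_Ico] at hk; omega
  obtain ⟨z, hz_def⟩ : ∃ z, z = cexp (π * I / n) ^ k := ⟨_, rfl⟩
  have hz : z = cexp ((k * π / n : ℝ) * I) := by
    rw [hz_def, ← exp_nat_mul]; push_cast; ring_nf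
  have hz0 : z ≠ 0 := by rw [hz]; exact exp_ne_zero _
  have hz1 : z ≠ 1 := by
    rw [mem_Ico] at hk
    exact hz_def ▸ (isPrimitiveRoot_exp_pi_div hn).pow_ne_one_of_pos_of_lt (by omega) hk.2
  have hsign : ((-1) ^ (k + 1) : ℂ) = -z ^ n := by
    have hζn : cexp (π * I / n) ^ n = -1 := by
      rw [← exp_nat_mul, mul_div_cancel₀ _ (Nat.cast_ne_zero.mpr hn), exp_pi_mul_I]
    rw [hz_def, ← pow_mul, mul_comm k n, pow_mul, hζn, pow_succ]; ring
  have hcos : ∀ p : ℕ, 1 - (Real.cos (p * (k * π / n)) : ℂ) = (2 - z ^ p - (z ^ p)⁻¹) / 2 :=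
    fun p => hz ▸ one_sub_cos_nat_mul_eq _ p
  have hν : (rieszWeight n k : ℂ) = -2 * z ^ n / (2 - z - z⁻¹) := by
    have h1 := hcos 1
    simp only [Nat.cast_one, one_mul, pow_one] at h1
    simp only [rieszWeight]
    push_cast at h1 ⊢
    rw [hsign, h1, div_div_eq_mul_div]
    ring
  calc (rieszWeight n k : ℂ) * (1 - Real.cos (m * (k * π / n)))
      = -(z ^ (n - m + m) * (2 - z ^ m - (z ^ m)⁻¹) / (2 - z - z⁻¹)) := by
        rw [Nat.sub_add_cancel hm, hν, hcos m]
        ring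
    _ = -∑ j ∈ range m, ∑ l ∈ range m, (cexp (π * I / n) ^ (n - m + 1 + j + l)) ^ k := by
        rw [pow_add_mul_two_sub_div_two_sub hz0 hz1, sq, sum_mul_sum, mul_sum]
        simp_rw [mul_sum, ← pow_right_comm _ k, ← hz_def, ← pow_add]
        ring_nf

lemma sum_mul_one_sub_cos (m : ℕ) (hm : m ≤ n) :
    ∑ k ∈ Ico 1 (2 * n), rieszWeight n k * (1 - Real.cos (m * (k * π / n))) = m ^ 2 := by
  rcases eq_or_ne n 0 with rfl | hn
  · simp [show m = 0 by omega]
  apply ofReal_injective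
  simp only [ofReal_sum, ofReal_mul, ofReal_sub, ofReal_one, ofReal_pow, ofReal_natCast]
  rw [sum_congr rfl fun k hk => mul_one_sub_cos_eq hk hm, sum_neg_distrib, sum_comm]
  have hroot : ∀ j ∈ range m, ∀ l ∈ range m,
      ∑ k ∈ Ico 1 (2 * n), (cexp (π * I / n) ^ (n - m + 1 + j + l)) ^ k = -1 := by
    intro j hj l hl
    rw [mem_range] at hj hl
    exact sum_Ico_pow_eq_neg_one (isPrimitiveRoot_exp_pi_div hn) (by omega) (by omega)
  simp_rw [sum_comm (s := Ico 1 (2 * n))]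
  rw [sum_congr rfl fun j hj => sum_congr rfl fun l hl => hroot j hj l hl]
  simp [sq]

lemma sum_mul_one_sub_exp {m : ℤ} (hm : |m| ≤ n) :
    ∑ k ∈ Ico 1 (2 * n), (rieszWeight n k : ℂ) * (1 - cexp (m * (k * π / n : ℝ) * I))
      = m ^ 2 := by
  have hcos : ∀ x : ℝ, Real.cos (m.natAbs * x) = Real.cos (m * x) := by
    intro x
    rw [Nat.cast_natAbs, Int.cast_abs]
    rcases abs_choice (m : ℝ) with h | h <;> simp [h]
  have hterm : ∀ k : ℕ, (rieszWeight n k : ℂ) * (1 - cexp (m * (k * π / n : ℝ) * I))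
      = ((rieszWeight n k * (1 - Real.cos (m.natAbs * (k * π / n))) : ℝ) : ℂ)
        - ((rieszWeight n k * Real.sin (m * (k * π / n)) : ℝ) : ℂ) * I := by
    intro k
    rw [hcos, ← ofReal_intCast, ← ofReal_mul, exp_mul_I, ← ofReal_cos, ← ofReal_sin]
    push_cast
    ring
  rw [sum_congr rfl fun k _ => hterm k, sum_sub_distrib, ← sum_mul, ← ofReal_sum, ← ofReal_sum,
    sum_mul_one_sub_cos _ (by rw [abs_le] at hm; omega), sum_mul_sin]
  push_cast
  rw [zero_mul, sub_zero, Nat.cast_natAbs, ← Int.cast_pow, sq_abs, Int.cast_pow]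

end rieszWeight

-- `∑ i, w i * m i ^ 2 = -T''(0)`.
open rieszWeight in
theorem re_sum_mul_sq_le_sq {ι : Type*} [Fintype ι] {n : ℕ} {T : ℝ → ℝ} {w : ι → ℂ} {m : ι → ℤ}
    (hm : ∀ i, |m i| ≤ n) (hT : ∀ θ : ℝ, (T θ : ℂ) = ∑ i, w i * cexp (m i * θ * I))
    (hT0 : T 0 = 1) (hT1 : ∀ θ, |T θ| ≤ 1) : (∑ i, w i * m i ^ 2).re ≤ n ^ 2 := by
  have hw : ∑ i, w i = 1 := by simpa [hT0] using (hT 0).symm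
  have hquad : ∑ i, w i * m i ^ 2
      = ((∑ k ∈ Ico 1 (2 * n), rieszWeight n k * (1 - T (k * π / n)) : ℝ) : ℂ) := by
    calc ∑ i, w i * m i ^ 2
        = ∑ i, w i * ∑ k ∈ Ico 1 (2 * n),
            (rieszWeight n k : ℂ) * (1 - cexp (m i * (k * π / n : ℝ) * I)) := by
          simp_rw [sum_mul_one_sub_exp (hm _)]
      _ = ∑ k ∈ Ico 1 (2 * n), (rieszWeight n k : ℂ)
            * (∑ i, w i - ∑ i, w i * cexp (m i * (k * π / n : ℝ) * I)) := by
          simp_rw [mul_sum]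
          rw [sum_comm]
          refine sum_congr rfl fun k _ => ?_
          rw [← sum_sub_distrib, mul_sum]
          exact sum_congr rfl fun i _ => by ring
      _ = _ := by simp_rw [hw, ← hT]; push_cast; rfl
  have hextremal : ∑ k ∈ Ico 1 (2 * n), rieszWeight n k * (1 - (-1) ^ k) = n ^ 2 := by
    rw [← sum_mul_one_sub_cos n le_rfl]
    refine sum_congr rfl fun k hk => ?_
    have hn : (n : ℝ) ≠ 0 := by rw [mem_Ico] at hk; norm_cast; omega
    rw [mul_div_cancel₀ _ hn, Real.cos_nat_mul_pi]
  have hdefect : 0 ≤ ∑ k ∈ Ico 1 (2 * n), rieszWeight n k * (T (k * π / n) - (-1) ^ k) :=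
    sum_nonneg fun k hk => mul_sub_neg_one_pow_nonneg hk (hT1 _)
  rw [hquad, ofReal_re]
  calc ∑ k ∈ Ico 1 (2 * n), rieszWeight n k * (1 - T (k * π / n))
      = ∑ k ∈ Ico 1 (2 * n), rieszWeight n k * (1 - (-1) ^ k)
        - ∑ k ∈ Ico 1 (2 * n), rieszWeight n k * (T (k * π / n) - (-1) ^ k) := by
        rw [← sum_sub_distrib]
        exact sum_congr rfl fun k _ => by ring
    _ ≤ n ^ 2 := by linarith

theorem sum_sq_sub_sq_sum_le {ι : Type*} [Fintype ι] [DecidableEq ι] (c : ι → ℝ)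
    (hc : ∀ θ : ℝ, |∏ j, (Real.cos θ + c j * Real.sin θ)| ≤ 1) :
    ∑ j, c j ^ 2 - (∑ j, c j) ^ 2 ≤ Fintype.card ι * (Fintype.card ι - 1) := by
  have hfreq : ∀ s : ι → ℤˣ, |∑ j, (s j : ℤ)| ≤ Fintype.card ι := fun s =>
    (abs_sum_le_sum_abs _ _).trans_eq <| by
      simp [fun j => Int.isUnit_iff_abs_eq.mp (s j).isUnit]
  have h := re_sum_mul_sq_le_sq hfreq (prod_cos_add_mul_sin_eq_sum c) (by simp) hc
  rw [sum_prod_cosAddMulSinCoeff_mul_sq, ofReal_re] at h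
  linarith

open Matrix

section SymmetricRowStochastic

variable {ι : Type*} [Fintype ι] {M : Matrix ι ι ℝ}

lemma sum_mulVec_eq_sum (hM : M.IsSymm) (h1 : M *ᵥ 1 = 1) (v : ι → ℝ) :
    ∑ j, (M *ᵥ v) j = ∑ j, v j := by
  rw [← one_dotProduct, dotProduct_mulVec, ← hM.eq, vecMul_transpose, h1, one_dotProduct]

lemma dotProduct_mulVec_cos_smul_add_sin_smul (hM : M.IsSymm) (h1 : M *ᵥ 1 = 1) {v : ι → ℝ}
    (hv : v ⬝ᵥ M *ᵥ v = Fintype.card ι) (hsum : ∑ j, v j = 0) (θ : ℝ) :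
    (Real.cos θ • 1 + Real.sin θ • v) ⬝ᵥ M *ᵥ (Real.cos θ • 1 + Real.sin θ • v)
      = Fintype.card ι := by
  have h1v : (1 : ι → ℝ) ⬝ᵥ M *ᵥ v = 0 := by rw [one_dotProduct, sum_mulVec_eq_sum hM h1, hsum]
  have hv1 : v ⬝ᵥ (1 : ι → ℝ) = 0 := by rw [dotProduct_one, hsum]
  simp only [mulVec_add, mulVec_smul, h1, add_dotProduct, dotProduct_add, smul_dotProduct,
    dotProduct_smul, one_dotProduct_one, h1v, hv1, hv, smul_eq_mul]
  linear_combination (Fintype.card ι : ℝ) * Real.cos_sq_add_sin_sq θ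

end SymmetricRowStochastic

theorem slice_norm_bound_general (n : ℕ)
    (M : Matrix (Fin n) (Fin n) ℝ) (hM : M.PosDef)
    (hones : M.mulVec (fun _ => 1) = fun _ => 1)
    (hb : ∀ b : Fin n → ℝ, b ⬝ᵥ M.mulVec b = n → ∏ j, |M.mulVec b j| ≤ 1) :
    ∀ v : Fin n → ℝ, v ⬝ᵥ M.mulVec v = n → ∑ j, v j = 0 →
      ∑ j, (M.mulVec v j) ^ 2 ≤ n * ((n : ℝ) - 1) := by
  intro v hv hsum
  have hsymm : M.IsSymm := (conjTranspose_eq_transpose_of_trivial M).symm.trans hM.isHermitian.eq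
  have h1 : M *ᵥ 1 = 1 := hones
  have hv' : v ⬝ᵥ M *ᵥ v = Fintype.card (Fin n) := by rw [hv, Fintype.card_fin]
  have hc : ∀ θ : ℝ, |∏ j, (Real.cos θ + (M *ᵥ v) j * Real.sin θ)| ≤ 1 := by
    intro θ
    have hnorm := dotProduct_mulVec_cos_smul_add_sin_smul hsymm h1 hv' hsum θ
    rw [Fintype.card_fin] at hnorm
    have h := hb _ hnorm
    simpa [mulVec_add, mulVec_smul, h1, abs_prod, mul_comm] using h
  have h := sum_sq_sub_sq_sum_le (M *ᵥ v) hc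
  rw [sum_mulVec_eq_sum hsymm h1, hsum, Fintype.card_fin] at h
  linarith

theorem slice_norm_bound (n : ℕ) (hn : 2 ≤ n)
    (M : Matrix (Fin n) (Fin n) ℝ) (hM : M.PosDef)
    (hones : M.mulVec (fun _ => 1) = fun _ => 1)
    (hb : ∀ b : Fin n → ℝ, b ⬝ᵥ M.mulVec b = n → ∏ j, |M.mulVec b j| ≤ 1) :
    ∀ v : Fin n → ℝ, v ⬝ᵥ M.mulVec v = n → ∑ j, v j = 0 →
      ∑ j, (M.mulVec v j) ^ 2 ≤ n * ((n : ℝ) - 1) :=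
  slice_norm_bound_general n M hM hones hb
end

section
/- Let a_1,...,a_n be real numbers and T(θ) = ∏_{j=1}^n (cos θ + a_j sin θ). If |T(θ)| ≤ 1 for all θ ∈ [0, 2π], then n + Σ_j a_j² ≤ n², i.e., Σ_j a_j² ≤ n(n−1). -/
/-!
Writing `cos θ + a sin θ = u e^{iθ} + v e^{-iθ}` with `u = (1 - ia)/2`, `v = (1 + ia)/2` expands
`T(θ) = ∑_t W_t e^{i(2|t| - n)θ}` over subsets `t` of the indices, with `∑_t W_t = 1`; reading `W`
as the law of a random subset, `4 ∑_t W_t |t| (n - |t|) = n² - n + (∑ a_j)² - ∑ a_j²`, which is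
`n² T(0) + T''(0)`. As in the Riesz interpolation proof of Bernstein's inequality, this functional
is a quadrature at the nodes `x_k = kπ/n`, `0 ≤ k < 2n`: discrete Fourier inversion of
`j ↦ j (2n - j)` over the `2n`-th roots of unity gives
`∑_k (1 - (-1)^k T(x_k)) / (1 - cos x_k) = 4 ∑_t W_t |t| (n - |t|)`.
Every term on the left is nonnegative when `|T| ≤ 1`, so `n² - n - ∑ a_j² ≥ 0` once `∑ a_j = 0`.
-/

open Finset Complex Real

section PowersetWeights

variable {ι R : Type*} [Fintype ι] [DecidableEq ι] [CommRing R] {u v : ι → R}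

theorem sum_prod_mul_prod_compl_ite_mem_and_mem_compl (huv : ∀ i, u i + v i = 1) (j l : ι) :
    ∑ t : Finset ι, (if j ∈ t ∧ l ∈ tᶜ then (∏ i ∈ t, u i) * ∏ i ∈ tᶜ, v i else 0) =
      if j = l then 0 else u j * v l := by
  split_ifs with hjl
  · subst hjl
    simp
  -- Killing `u l` and `v j` turns the restricted sum into a full one, which factors.
  have hterm : ∀ t : Finset ι, (if j ∈ t ∧ l ∈ tᶜ then (∏ i ∈ t, u i) * ∏ i ∈ tᶜ, v i else 0) =
      (∏ i ∈ t, Function.update u l 0 i) * ∏ i ∈ tᶜ, Function.update v j 0 i := by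
    intro t
    by_cases hl : l ∈ t <;> by_cases hj : j ∈ t <;>
      simp [hl, hj, prod_update_of_mem, prod_update_of_notMem]
  have hsum : (fun i => Function.update u l 0 i + Function.update v j 0 i) =
      Function.update (Function.update (1 : ι → R) j (u j)) l (v l) := by
    ext i
    rcases eq_or_ne i l with rfl | hil
    · simp [Ne.symm hjl]
    rcases eq_or_ne i j with rfl | hij
    · simp [hil]
    simp [hil, hij, huv]
  rw [sum_congr rfl fun t _ => hterm t, ← Fintype.prod_add, hsum]
  simp [prod_update_of_mem, hjl, mul_comm]

theorem sum_prod_mul_prod_compl_mul_card_mul_card_compl (huv : ∀ i, u i + v i = 1) :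
    ∑ t : Finset ι, (∏ i ∈ t, u i) * (∏ i ∈ tᶜ, v i) * (#t * #tᶜ : R) =
      (∑ i, u i) * (∑ i, v i) - ∑ i, u i * v i := by
  have hcard : ∀ s : Finset ι, (#s : R) = ∑ j, if j ∈ s then 1 else 0 := fun s => by
    rw [sum_ite_mem, univ_inter, sum_const, nsmul_one]
  calc ∑ t : Finset ι, (∏ i ∈ t, u i) * (∏ i ∈ tᶜ, v i) * (#t * #tᶜ : R)
      = ∑ j, ∑ l, ∑ t : Finset ι,
          (if j ∈ t ∧ l ∈ tᶜ then (∏ i ∈ t, u i) * ∏ i ∈ tᶜ, v i else 0) := by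
        simp_rw [hcard, sum_mul_sum, ite_zero_mul_ite_zero, mul_one, mul_sum, mul_ite, mul_one,
          mul_zero]
        rw [sum_comm]
        exact sum_congr rfl fun _ _ => sum_comm
    _ = ∑ j, ∑ l, if j = l then 0 else u j * v l := by
        simp_rw [sum_prod_mul_prod_compl_ite_mem_and_mem_compl huv]
    _ = (∑ i, u i) * (∑ i, v i) - ∑ i, u i * v i := by
        rw [sum_mul_sum, ← sum_sub_distrib]
        refine sum_congr rfl fun j _ => ?_
        rw [eq_sub_iff_add_eq, ← Fintype.sum_ite_eq j (fun l => u j * v l), ← sum_add_distrib]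
        exact sum_congr rfl fun l _ => by split_ifs <;> simp

end PowersetWeights

theorem sum_range_mul_pow_mul_sub_one {R : Type*} [CommRing R] (f : ℕ → R) (q : R) (M : ℕ) :
    (∑ i ∈ range M, f i * q ^ i) * (q - 1) =
      f M * q ^ M - f 0 - q * ∑ i ∈ range M, (f (i + 1) - f i) * q ^ i := by
  induction M with
  | zero => simp
  | succ M ih => rw [sum_range_succ, sum_range_succ, add_mul, ih]; ring

section RootsOfUnity

variable {K : Type*} [Field K] {N : ℕ}

theorem sum_range_mul_sub_mul_pow_of_pow_eq_one {q : K} (hq : q ^ N = 1) (hq1 : q ≠ 1) :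
    ∑ i ∈ range N, (i * (N - i) : K) * q ^ i = 2 * N * q / (q - 1) ^ 2 := by
  have hgeom : ∑ i ∈ range N, q ^ i = 0 := by rw [geom_sum_eq hq1, hq, sub_self, zero_div]
  -- Two summations by parts: the second difference of `i * (N - i)` is constant.
  have hS := sum_range_mul_pow_mul_sub_one (fun i : ℕ => (i * (N - i) : K)) q N
  have hG := sum_range_mul_pow_mul_sub_one (fun i : ℕ => (N - 2 * i - 1 : K)) q N
  simp only [Nat.cast_add, Nat.cast_one, Nat.cast_zero, sub_self, mul_zero, zero_mul,
    sub_zero, hq] at hS hG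
  have hdS : ∀ i : ℕ, ((i + 1 : K) * (N - (i + 1)) - i * (N - i)) = N - 2 * i - 1 := fun i => by
    ring
  have hdG : ∀ i : ℕ, ((N : K) - 2 * (i + 1) - 1 - (N - 2 * i - 1)) = -2 := fun i => by ring
  simp_rw [hdS] at hS
  simp_rw [hdG, ← mul_sum, hgeom] at hG
  rw [eq_div_iff (pow_ne_zero 2 (sub_ne_zero.2 hq1))]
  linear_combination (q - 1) * hS - q * hG

theorem IsPrimitiveRoot.sum_range_div_pow_pow {ζ : K} (hζ : IsPrimitiveRoot ζ N) {i j : ℕ}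
    (hi : i < N) (hj : j < N) :
    ∑ k ∈ range N, (ζ ^ j / ζ ^ i) ^ k = if i = j then (N : K) else 0 := by
  have hζ0 : ζ ≠ 0 := hζ.ne_zero (by omega)
  split_ifs with hij
  · simp [hij, hζ0]
  have hne : ζ ^ j / ζ ^ i ≠ 1 := fun h =>
    hij (hζ.pow_inj hj hi ((div_eq_one_iff_eq (pow_ne_zero _ hζ0)).1 h)).symm
  rw [geom_sum_eq hne, div_pow, ← pow_mul, ← pow_mul, mul_comm j, mul_comm i, pow_mul, pow_mul,
    hζ.pow_eq_one]
  simp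

theorem IsPrimitiveRoot.sum_range_div_sub_one_sq_mul_pow_sub_one [CharZero K] {ζ : K}
    (hζ : IsPrimitiveRoot ζ N) {j : ℕ} (hj : j ≤ N) :
    ∑ k ∈ range N, 2 * ζ⁻¹ ^ k / (ζ⁻¹ ^ k - 1) ^ 2 * (ζ ^ (k * j) - 1) = (j * (N - j) : K) := by
  rcases hj.lt_or_eq with hj | rfl
  swap
  · rw [sub_self, mul_zero]
    exact sum_eq_zero fun k _ => by
      rw [mul_comm k, pow_mul, hζ.pow_eq_one, one_pow, sub_self, mul_zero]
  have hN : (N : K) ≠ 0 := Nat.cast_ne_zero.2 (by omega)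
  -- The weights are the discrete Fourier coefficients of `i ↦ i * (N - i)`.
  have hweight : ∀ k ∈ range N, 2 * ζ⁻¹ ^ k / (ζ⁻¹ ^ k - 1) ^ 2 * (ζ ^ (k * j) - 1) =
      (N : K)⁻¹ * ∑ i ∈ range N, (i * (N - i) : K) *
        ((ζ ^ j / ζ ^ i) ^ k - (ζ ^ 0 / ζ ^ i) ^ k) := by
    intro k hk
    have hpow : ∀ i, (ζ ^ j / ζ ^ i) ^ k - (ζ ^ 0 / ζ ^ i) ^ k =
        (ζ⁻¹ ^ k) ^ i * (ζ ^ (k * j) - 1) := by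
      intro i
      simp only [div_pow, inv_pow, ← pow_mul, pow_zero]
      rw [mul_comm k i, mul_comm k j]
      ring
    simp_rw [hpow, ← mul_assoc, ← sum_mul]
    rcases eq_or_ne k 0 with rfl | hk0
    · simp
    have hq : (ζ⁻¹ ^ k) ^ N = 1 := by rw [← pow_mul, mul_comm, pow_mul, hζ.inv.pow_eq_one, one_pow]
    rw [sum_range_mul_sub_mul_pow_of_pow_eq_one hq
      (hζ.inv.pow_ne_one_of_pos_of_lt hk0 (mem_range.1 hk))]
    field_simp
  rw [sum_congr rfl hweight, ← mul_sum, sum_comm]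
  have horth : ∀ i ∈ range N, ∑ k ∈ range N, (i * (N - i) : K) *
      ((ζ ^ j / ζ ^ i) ^ k - (ζ ^ 0 / ζ ^ i) ^ k) =
        (i * (N - i) : K) * ((if i = j then (N : K) else 0) - if i = 0 then (N : K) else 0) :=
    fun i hi => by rw [← mul_sum, sum_sub_distrib, hζ.sum_range_div_pow_pow (mem_range.1 hi) hj,
      hζ.sum_range_div_pow_pow (mem_range.1 hi) (by omega)]
  rw [sum_congr rfl horth]
  simp [mul_sub, sum_ite_eq', hj]
  field_simp

end RootsOfUnity

theorem two_mul_exp_neg_div_sub_one_sq (x : ℝ) :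
    2 * cexp (-(x * I)) / (cexp (-(x * I)) - 1) ^ 2 = -1 / (1 - Real.cos x) := by
  have hq : cexp (-(x * I)) ≠ 0 := Complex.exp_ne_zero _
  have hsq : (cexp (-(x * I)) - 1) ^ 2 = -2 * cexp (-(x * I)) * (1 - Real.cos x) := by
    simp only [ofReal_cos, Complex.cos, neg_mul, Complex.exp_neg]
    field_simp
    ring
  rw [hsq, ← div_div, show 2 * cexp (-(x * I)) / (-2 * cexp (-(x * I))) = -1 by field_simp]

-- The `k = 0` term is `0 / 0 = 0`.
theorem sum_range_one_sub_exp_pow_div_one_sub_cos {N : ℕ} (hN : N ≠ 0) {j : ℕ} (hj : j ≤ N) :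
    ∑ k ∈ range N, (1 - cexp ((2 * π * k / N : ℝ) * I) ^ j) / (1 - Real.cos (2 * π * k / N)) =
      (j * (N - j) : ℂ) := by
  have hζ := Complex.isPrimitiveRoot_exp N hN
  rw [← hζ.sum_range_div_sub_one_sq_mul_pow_sub_one hj]
  refine sum_congr rfl fun k _ => ?_
  have hk : cexp (2 * π * I / N) ^ k = cexp ((2 * π * k / N : ℝ) * I) := by
    rw [← Complex.exp_nat_mul]
    push_cast
    ring_nf
  rw [inv_pow, hk, ← Complex.exp_neg, two_mul_exp_neg_div_sub_one_sq, pow_mul, hk]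
  ring

theorem exp_neg_pi_mul_div_mul_I_pow {n : ℕ} (hn : n ≠ 0) (k : ℕ) :
    cexp (-((π * k / n : ℝ) * I)) ^ n = (-1) ^ k := by
  rw [← Complex.exp_nat_mul, show (n : ℂ) * -((π * k / n : ℝ) * I) = k * -(π * I) by
    push_cast; field_simp, Complex.exp_nat_mul, Complex.exp_neg, Complex.exp_pi_mul_I]
  norm_num

theorem ofReal_cos_add_mul_sin (x a : ℝ) :
    ((Real.cos x + a * Real.sin x : ℝ) : ℂ) =
      cexp (-(x * I)) * ((1 - a * I) / 2 * cexp (x * I) ^ 2 + (1 + a * I) / 2) := by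
  push_cast
  simp only [Complex.cos, Complex.sin, neg_mul, Complex.exp_neg]
  field_simp
  ring_nf

section FourierWeight

variable {ι : Type*} [Fintype ι] [DecidableEq ι]

noncomputable def fourierWeight (a : ι → ℝ) (t : Finset ι) : ℂ :=
  (∏ j ∈ t, (1 - a j * I) / 2) * ∏ j ∈ tᶜ, (1 + a j * I) / 2

theorem ofReal_prod_cos_add_mul_sin (a : ι → ℝ) (x : ℝ) :
    ((∏ j, (Real.cos x + a j * Real.sin x) : ℝ) : ℂ) =
      cexp (-(x * I)) ^ Fintype.card ι * ∑ t, fourierWeight a t * cexp (x * I) ^ (2 * #t) := by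
  simp_rw [ofReal_prod, ofReal_cos_add_mul_sin, prod_mul_distrib, prod_const, card_univ,
    Fintype.prod_add, prod_mul_distrib, prod_const, fourierWeight]
  congr 1
  refine sum_congr rfl fun t _ => ?_
  rw [pow_mul]
  ring

theorem sum_fourierWeight (a : ι → ℝ) : ∑ t, fourierWeight a t = 1 := by
  simp_rw [fourierWeight, ← Fintype.prod_add]
  exact prod_eq_one fun j _ => by ring

theorem sum_fourierWeight_mul_card_mul_card_compl (a : ι → ℝ) :
    ∑ t, fourierWeight a t * (#t * #tᶜ : ℂ) =
      ((Fintype.card ι ^ 2 + (∑ j, a j) ^ 2 - Fintype.card ι - ∑ j, a j ^ 2 : ℝ) : ℂ) / 4 := by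
  simp_rw [fourierWeight]
  rw [sum_prod_mul_prod_compl_mul_card_mul_card_compl fun j => by ring]
  have hu : ∑ j, (1 - a j * I) / 2 = (Fintype.card ι - (∑ j, a j : ℝ) * I) / 2 := by
    simp [← sum_div, sum_sub_distrib, ← sum_mul]
  have hv : ∑ j, (1 + a j * I) / 2 = (Fintype.card ι + (∑ j, a j : ℝ) * I) / 2 := by
    simp [← sum_div, sum_add_distrib, ← sum_mul]
  have huv : ∑ j, (1 - a j * I) / 2 * ((1 + a j * I) / 2) =
      (Fintype.card ι + (∑ j, a j ^ 2 : ℝ)) / 4 := by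
    rw [sum_congr rfl fun j _ => show (1 - a j * I) / 2 * ((1 + a j * I) / 2) =
      (1 + (a j : ℂ) ^ 2) / 4 by linear_combination (-(a j : ℂ) ^ 2 / 4) * I_sq]
    simp [← sum_div, sum_add_distrib]
  rw [hu, hv, huv]
  push_cast
  linear_combination (-(∑ j, (a j : ℂ)) ^ 2 / 4) * I_sq

theorem sum_range_one_sub_neg_one_pow_mul_prod_div_one_sub_cos (a : ι → ℝ) :
    ∑ k ∈ range (2 * Fintype.card ι),
        (1 - (-1) ^ k * ∏ j, (Real.cos (π * k / Fintype.card ι) +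
          a j * Real.sin (π * k / Fintype.card ι))) / (1 - Real.cos (π * k / Fintype.card ι)) =
      Fintype.card ι ^ 2 + (∑ j, a j) ^ 2 - Fintype.card ι - ∑ j, a j ^ 2 := by
  set n := Fintype.card ι
  rcases eq_or_ne n 0 with hn | hn
  · have : IsEmpty ι := Fintype.card_eq_zero_iff.1 hn
    simp [hn]
  have hnode : ∀ k : ℕ, π * k / n = 2 * π * k / (2 * n : ℕ) := fun k => by
    push_cast
    field_simp
  have hterm : ∀ k ∈ range (2 * n), (((1 - (-1) ^ k * ∏ j, (Real.cos (π * k / n) +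
      a j * Real.sin (π * k / n))) / (1 - Real.cos (π * k / n)) : ℝ) : ℂ) =
        ∑ t, fourierWeight a t * ((1 - cexp ((2 * π * k / (2 * n : ℕ) : ℝ) * I) ^ (2 * #t)) /
          (1 - Real.cos (2 * π * k / (2 * n : ℕ)))) := fun k _ => by
    rw [← hnode]
    have hprod := ofReal_prod_cos_add_mul_sin a (π * k / n)
    rw [exp_neg_pi_mul_div_mul_I_pow hn] at hprod
    simp only [ofReal_div, ofReal_sub, ofReal_mul, ofReal_one, ofReal_pow, ofReal_neg, hprod,
      ← mul_assoc, ← mul_pow, neg_one_mul, neg_neg, one_pow, one_mul]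
    nth_rw 1 [← sum_fourierWeight a]
    rw [← sum_sub_distrib, sum_div]
    exact sum_congr rfl fun t _ => by ring
  apply ofReal_injective
  rw [ofReal_sum, sum_congr rfl hterm, sum_comm]
  simp_rw [← mul_sum]
  rw [sum_congr rfl fun t _ => by rw [sum_range_one_sub_exp_pow_div_one_sub_cos (by omega)
    (by simpa using card_le_univ t)]]
  have hcompl : ∀ t : Finset ι,
      ((2 * #t : ℕ) : ℂ) * ((2 * n : ℕ) - (2 * #t : ℕ)) = 4 * (#t * #tᶜ) := fun t => by
    rw [card_compl, Nat.cast_sub (card_le_univ t)]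
    push_cast
    ring
  simp_rw [hcompl, mul_left_comm _ (4 : ℂ), ← mul_sum,
    sum_fourierWeight_mul_card_mul_card_compl]
  ring

end FourierWeight

theorem trig_poly_bound (n : ℕ) (a : Fin n → ℝ) (hsum : ∑ j, a j = 0)
    (T : ℝ → ℝ) (hT : ∀ θ, T θ = ∏ j, (Real.cos θ + a j * Real.sin θ))
    (hbd : ∀ θ ∈ Set.Icc (0 : ℝ) (2 * π), |T θ| ≤ 1) :
    ∑ j, (a j) ^ 2 ≤ n * ((n : ℝ) - 1) := by
  have hid := sum_range_one_sub_neg_one_pow_mul_prod_div_one_sub_cos a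
  simp only [Fintype.card_fin, hsum, ← hT] at hid
  have hterm : ∀ k ∈ range (2 * n),
      0 ≤ (1 - (-1) ^ k * T (π * k / n)) / (1 - Real.cos (π * k / n)) := by
    intro k hk
    have hk2n : (k : ℝ) ≤ 2 * n := by exact_mod_cast (mem_range.1 hk).le
    have hn : (0 : ℝ) < n := by exact_mod_cast (show 0 < n by grind)
    have hT1 := hbd (π * k / n) ⟨by positivity, by rw [div_le_iff₀ hn]; nlinarith [pi_pos]⟩
    refine div_nonneg (sub_nonneg.2 ?_) (sub_nonneg.2 (cos_le_one _))
    calc (-1) ^ k * T (π * k / n) ≤ |(-1) ^ k * T (π * k / n)| := le_abs_self _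
      _ ≤ 1 := by rwa [abs_mul, abs_pow, abs_neg, abs_one, one_pow, one_mul]
  linarith [sum_nonneg hterm]
end
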